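/- arXiv:2209.14880 — 5 statements merged into one kernel-verified Lean document; each statement's English description precedes it below -/
import Mathlib

section
/- There exists ε₀ ∈ (0, π/6) such that for every ε ∈ (0, ε₀), every r₀ ∈ (1, √2), every pair of potentials v₂, v₃ satisfying assumptions (i₂)–(iii₂) and (i₃)–(iv₃), and every configuration C_n of n distinct points in ℝ² minimizing the energy F among all n-point configurations, the natural bond graph G_nat = (C_n, E_nat) of C_n is ε-regular, and moreover #N(x, E_nat) ≤ 4 for every x ∈ C_n. -/
open scoped Real

noncomputable section

abbrev Pt : Type := EuclideanSpace ℝ (Fin 2)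

/-- The clockwise angle in `[0, 2π)` between the vectors `u` and `v`. -/
noncomputable def cwAngle (u v : Pt) : ℝ :=
  let a := Complex.arg ((⟨u 0, u 1⟩ : ℂ) * (starRingEnd ℂ) (⟨v 0, v 1⟩ : ℂ))
  if a < 0 then a + 2 * π else a

/-- Assumptions (i₂)–(iii₂) on the two-body potential. -/
structure V2Hyp (ε r0 : ℝ) (v2 : ℝ → EReal) : Prop where
  eq_neg_one : v2 1 = -1
  ge_neg_one : ∀ r : ℝ, 0 ≤ r → -1 ≤ v2 r
  gt_neg_one : ∀ r : ℝ, 0 ≤ r → r ≠ 1 → -1 < v2 r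
  eq_zero : ∀ r : ℝ, r0 ≤ r → v2 r = 0
  repulsive : ∀ r : ℝ, 0 ≤ r → r ≤ 1 - ε → ((ε⁻¹ : ℝ) : EReal) < v2 r

/-- Assumptions (i₃)–(iv₃) on the three-body potential. -/
structure V3Hyp (ε : ℝ) (v3 : ℝ → ℝ) : Prop where
  symm : ∀ θ : ℝ, 0 ≤ θ → θ ≤ 2 * π → v3 θ = v3 (2 * π - θ)
  zero_pi_half : v3 (π / 2) = 0
  zero_pi : v3 π = 0
  zero_three_pi_half : v3 (3 * π / 2) = 0
  pos : ∀ θ : ℝ, 0 ≤ θ → θ ≤ 2 * π → θ ∉ ({π / 2, π, 3 * π / 2} : Set ℝ) → 0 < v3 θ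
  slope : ∀ θ ∈ Set.Icc (π - ε) (π + ε), 4 * (π / 6 - ε)⁻¹ * |θ - π| ≤ v3 θ
  slope_eq : ∀ θ ∈ Set.Icc (π - ε) (π + ε), v3 θ = 4 * (π / 6 - ε)⁻¹ * |θ - π| → θ = π
  large : ∀ θ : ℝ, 0 ≤ θ → θ ≤ 2 * π →
    θ ∉ Set.Icc (π / 2 - ε) (π / 2 + ε) ∪ Set.Icc (π - ε) (π + ε) ∪
        Set.Icc (3 * π / 2 - ε) (3 * π / 2 + ε) →
    4 / (1 - ε) ^ 2 * (Real.sqrt 2 + 1 / 2) ^ 2 < v3 θ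

/-- The configurational energy `F(C_n)`. -/
noncomputable def energy (r0 : ℝ) (v2 : ℝ → EReal) (v3 : ℝ → ℝ) {n : ℕ}
    (x : Fin n → Pt) : EReal :=
  ((1 / 2 : ℝ) : EReal) *
      ∑ i : Fin n, ∑ j : Fin n, (if j ≠ i then v2 (dist (x i) (x j)) else 0)
    + (((1 / 2 : ℝ) * ∑ i : Fin n, ∑ j : Fin n, ∑ k : Fin n,
        (if i ≠ j ∧ i ≠ k ∧ j ≠ k ∧ dist (x i) (x j) ≤ r0 ∧ dist (x i) (x k) ≤ r0
          then v3 (cwAngle (x j - x i) (x k - x i)) else 0) : ℝ) : EReal)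

/-- `x` is an `n`-point configuration of minimal energy. -/
def IsMinimizer (r0 : ℝ) (v2 : ℝ → EReal) (v3 : ℝ → ℝ) {n : ℕ} (x : Fin n → Pt) : Prop :=
  Function.Injective x ∧
    ∀ y : Fin n → Pt, Function.Injective y → energy r0 v2 v3 x ≤ energy r0 v2 v3 y


structure BondGraph where
  V : Set Pt
  finV : V.Finite
  E : Set (Sym2 Pt)
  not_diag : ∀ e ∈ E, ¬ e.IsDiag
  mem_V : ∀ e ∈ E, ∀ x ∈ e, x ∈ V

/-- The neighborhood `N(x, E)`. -/
def nbhd (G : BondGraph) (x : Pt) : Set Pt := {y | s(x, y) ∈ G.E}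

/-- The degree `#N(x, E)`. -/
noncomputable def deg (G : BondGraph) (x : Pt) : ℕ := (nbhd G x).ncard

/-- The bond energy `F_bond(G) = Σ_{x ∈ V} (4 − #N(x,E))`. -/
noncomputable def Fbond (G : BondGraph) : ℤ := ∑ᶠ x ∈ G.V, ((4 : ℤ) - (deg G x : ℤ))

def goodAngles (ε : ℝ) : Set ℝ :=
  Set.Icc (π / 2 - ε) (π / 2 + ε) ∪ Set.Icc (π - ε) (π + ε) ∪
    Set.Icc (3 * π / 2 - ε) (3 * π / 2 + ε)

/-- `ε`-regularity of a graph. -/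
def EpsRegular (ε : ℝ) (G : BondGraph) : Prop :=
  (∀ x y : Pt, s(x, y) ∈ G.E → 1 - ε ≤ dist x y) ∧
  (∀ x y z : Pt, s(x, y) ∈ G.E → s(z, y) ∈ G.E → x ≠ z →
    cwAngle (x - y) (z - y) ∈ goodAngles ε)

/-- The natural bond graph of a configuration. -/
noncomputable def natGraph {n : ℕ} (r0 : ℝ) (x : Fin n → Pt)
    (hx : Function.Injective x) : BondGraph where
  V := Set.range x
  finV := Set.finite_range x
  E := {e | ∃ i j : Fin n, i ≠ j ∧ dist (x i) (x j) ≤ r0 ∧ e = s(x i, x j)}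
  not_diag := by
    rintro e ⟨i, j, hij, -, rfl⟩
    rw [Sym2.mk_isDiag_iff]
    exact fun h => hij (hx h)
  mem_V := by
    rintro e ⟨i, j, -, -, rfl⟩ y hy
    rw [Sym2.mem_iff] at hy
    rcases hy with rfl | rfl
    · exact Set.mem_range_self i
    · exact Set.mem_range_self j

/-!
Moving one point `x i` of a minimizer far away deletes every interaction term that involves it,
so the site energy `2 * ∑ j, pairTerm v2 x i j + ∑ j, ∑ k, angleTerm r0 v3 x i j k` is
nonpositive. Each of the `m` bonds at `x i` contributes at least `-2`, while every angle outside
`goodAngles ε` costs more than `12`. Sorting the `m` bond directions into five arcs of length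
`2π/5` yields at least `m - 5` angles below `2π/5 < π/2 - ε`, so `m ≥ 6` would make the site
energy positive. With at most five bonds, one bad angle (`12 > 10`) or one bond shorter than
`1 - ε` (`2ε⁻¹ > 8`) would again make it positive. Finally, bond directions that are pairwise at
least `π/2 - ε > 2π/5` apart on the circle number at most four.
-/

open Finset

theorem exists_large_subset_with_near_lower {ι : Type*} (s : Finset ι) (a : ι → ℝ) {c δ : ℝ}
    {k : ℕ} (hδ : 0 < δ) (hs : ∀ i ∈ s, a i ∈ Set.Ico c (c + k * δ)) :
    ∃ t ⊆ s, #s ≤ #t + k ∧ ∀ j ∈ t, ∃ i ∈ s, i ≠ j ∧ a i ≤ a j ∧ a j < a i + δ := by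
  classical
  set P : ι → Prop := fun j => ∃ i ∈ s, i ≠ j ∧ a i ≤ a j ∧ a j < a i + δ
  refine ⟨s.filter P, filter_subset _ _, ?_, fun j hj => (mem_filter.mp hj).2⟩
  suffices #(s.filter fun j => ¬P j) ≤ k by
    have := card_filter_add_card_filter_not (s := s) (p := P)
    omega
  -- An element without a near lower partner is the unique minimum of its bucket.
  set bucket : ι → ℕ := fun i => ⌊(a i - c) / δ⌋₊
  have hbucket (i) (hi : i ∈ s) :
      bucket i * δ ≤ a i - c ∧ a i - c < (bucket i + 1) * δ := by
    have h0 : 0 ≤ (a i - c) / δ := div_nonneg (by linarith [(hs i hi).1]) hδ.le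
    rw [← le_div_iff₀ hδ, ← div_lt_iff₀ hδ]
    exact ⟨Nat.floor_le h0, Nat.lt_floor_add_one _⟩
  refine (card_le_card_of_injOn bucket (fun i hi => ?_) fun i hi j hj hij => ?_).trans
    (card_range k).le
  · obtain ⟨hi, -⟩ := mem_filter.mp hi
    have := (hbucket i hi).1
    have h := (hs i hi).2
    simp only [coe_range, Set.mem_Iio]
    by_contra! hk
    have : (k : ℝ) ≤ bucket i := by exact_mod_cast hk
    nlinarith
  · obtain ⟨hi, hi'⟩ := mem_filter.mp hi
    obtain ⟨hj, hj'⟩ := mem_filter.mp hj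
    by_contra hne
    have hi₂ := hbucket i hi
    have hj₂ := hbucket j hj
    rw [hij] at hi₂
    rcases le_total (a i) (a j) with h | h
    · exact hj' ⟨i, hi, hne, h, by linarith⟩
    · exact hi' ⟨j, hj, Ne.symm hne, h, by linarith⟩

theorem card_le_of_forall_le_sub {ι : Type*} (s : Finset ι) (a : ι → ℝ) {c δ : ℝ}
    {k : ℕ} (hδ : 0 < δ) (hs : ∀ i ∈ s, a i ∈ Set.Ico c (c + k * δ))
    (hsep : ∀ i ∈ s, ∀ j ∈ s, i ≠ j → a i ≤ a j → δ ≤ a j - a i) : #s ≤ k := by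
  obtain ⟨t, hts, hcard, ht⟩ := exists_large_subset_with_near_lower s a hδ hs
  have : t = ∅ := eq_empty_of_forall_notMem fun j hj => by
    obtain ⟨i, hi, hij, hle, hlt⟩ := ht j hj
    linarith [hsep i hi j (hts hj) hij hle]
  simpa [this] using hcard

theorem exists_forall_lt_dist {E : Type*} [NormedAddCommGroup E] [NormedSpace ℝ E] [Nontrivial E]
    {ι : Type*} [Finite ι] (x : ι → E) (R : ℝ) : ∃ p, ∀ i, R < dist p (x i) := by
  have hbdd : Bornology.IsBounded (⋃ i, Metric.closedBall (x i) R) :=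
    Bornology.isBounded_iUnion.mpr fun i => Metric.isBounded_closedBall
  obtain ⟨p, hp⟩ := Set.ne_univ_iff_exists_notMem _ |>.mp
    fun h => NormedSpace.unbounded_univ ℝ E (h ▸ hbdd)
  exact ⟨p, fun i => not_le.mp fun h => hp (Set.mem_iUnion.mpr ⟨i, h⟩)⟩

theorem exists_pairwise_lt_dist (E : Type*) [NormedAddCommGroup E] [NormedSpace ℝ E]
    [Nontrivial E] (n : ℕ) (R : ℝ) : ∃ z : Fin n → E, Pairwise fun i j => R < dist (z i) (z j) := by
  obtain ⟨e, he⟩ := exists_norm_eq E zero_le_one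
  refine ⟨fun i => ((i : ℕ) * (|R| + 1) : ℝ) • e, fun i j hij => ?_⟩
  have hij' : (1 : ℝ) ≤ |((i : ℕ) : ℝ) - (j : ℕ)| := by
    have h : ((i : ℕ) : ℤ) - (j : ℕ) ≠ 0 := sub_ne_zero.mpr (by exact_mod_cast Fin.val_ne_of_ne hij)
    exact_mod_cast Int.one_le_abs h
  change R < dist _ _
  rw [dist_eq_norm, ← sub_smul, norm_smul, he, mul_one, ← sub_mul, Real.norm_eq_abs, abs_mul,
    abs_of_pos (by positivity : 0 < |R| + 1)]
  nlinarith [le_abs_self R, abs_nonneg R]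

theorem sum_sum_eq_sum_sum_ite_add {ι : Type*} [Fintype ι] [DecidableEq ι] (W : ι → ι → ℝ)
    (hW : ∀ i j, W i j = W j i) (i₀ : ι) (hW₀ : W i₀ i₀ = 0) :
    ∑ i, ∑ j, W i j = ∑ i, ∑ j, (if i = i₀ ∨ j = i₀ then 0 else W i j) + 2 * ∑ j, W i₀ j := by
  have hsplit (i j : ι) : W i j = (if i = i₀ ∨ j = i₀ then 0 else W i j)
      + ((if i = i₀ then W i j else 0) + (if j = i₀ then W j i else 0)) := by
    split_ifs <;> simp_all
  conv_lhs => enter [2, i, 2, j]; rw [hsplit i j]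
  rw [two_mul]
  simp only [sum_add_distrib, ← ite_sum_zero, sum_ite_eq', mem_univ, if_true]

theorem sum_sum_sum_ite_add_le {ι : Type*} [Fintype ι] [DecidableEq ι] (T : ι → ι → ι → ℝ)
    (hT : ∀ i j k, 0 ≤ T i j k) (i₀ : ι) :
    ∑ i, ∑ j, ∑ k, (if i = i₀ ∨ j = i₀ ∨ k = i₀ then 0 else T i j k) + ∑ j, ∑ k, T i₀ j k
      ≤ ∑ i, ∑ j, ∑ k, T i j k := by
  have hle (i j k : ι) : (if i = i₀ ∨ j = i₀ ∨ k = i₀ then 0 else T i j k)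
      + (if i = i₀ then T i j k else 0) ≤ T i j k := by
    split_ifs <;> simp_all
  calc _ = ∑ i, ∑ j, ∑ k, ((if i = i₀ ∨ j = i₀ ∨ k = i₀ then 0 else T i j k)
        + (if i = i₀ then T i j k else 0)) := by
        simp only [sum_add_distrib, ← ite_sum_zero, sum_ite_eq', mem_univ, if_true]
    _ ≤ _ := sum_le_sum fun i _ => sum_le_sum fun j _ => sum_le_sum fun k _ => hle i j k

theorem Function.Injective.update_of_notMem_range {α β : Type*} [DecidableEq α] {f : α → β}
    (hf : Function.Injective f) (a : α) {b : β} (hb : b ∉ Set.range f) :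
    Function.Injective (Function.update f a b) := by
  intro x y h
  by_cases hx : x = a <;> by_cases hy : y = a
  · rw [hx, hy]
  · subst hx
    rw [Function.update_self, Function.update_of_ne hy] at h
    exact absurd ⟨y, h.symm⟩ hb
  · subst hy
    rw [Function.update_self, Function.update_of_ne hx] at h
    exact absurd ⟨x, h⟩ hb
  · rw [Function.update_of_ne hx, Function.update_of_ne hy] at h
    exact hf h

theorem EReal.coe_finset_sum {ι : Type*} (s : Finset ι) (f : ι → ℝ) :
    ((∑ i ∈ s, f i : ℝ) : EReal) = ∑ i ∈ s, (f i : EReal) :=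
  map_sum (⟨⟨Real.toEReal, EReal.coe_zero⟩, EReal.coe_add⟩ : ℝ →+ EReal) f s

theorem EReal.sum_ne_bot {ι : Type*} {s : Finset ι} {f : ι → EReal} (hf : ∀ i ∈ s, f i ≠ ⊥) :
    ∑ i ∈ s, f i ≠ ⊥ := fun h => by
  obtain ⟨i, hi, hbot⟩ := WithBot.sum_eq_bot_iff.mp h
  exact hf i hi hbot

theorem EReal.sum_eq_top_of_mem {ι : Type*} {s : Finset ι} {f : ι → EReal}
    (hf : ∀ i ∈ s, f i ≠ ⊥) {i : ι} (hi : i ∈ s) (htop : f i = ⊤) : ∑ j ∈ s, f j = ⊤ := by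
  classical
  rw [← add_sum_erase s f hi, htop, EReal.top_add_of_ne_bot]
  exact EReal.sum_ne_bot fun j hj => hf j (mem_of_mem_erase hj)

theorem complex_mk_ne_zero {u : Pt} (hu : u ≠ 0) : (⟨u 0, u 1⟩ : ℂ) ≠ 0 := by
  contrapose! hu
  ext t
  fin_cases t
  · exact congrArg Complex.re hu
  · exact congrArg Complex.im hu

theorem cwAngle_mem_Ico (u v : Pt) : cwAngle u v ∈ Set.Ico 0 (2 * π) := by
  obtain ⟨h₁, h₂⟩ := Complex.arg_mem_Ioc ((⟨u 0, u 1⟩ : ℂ) * (starRingEnd ℂ) ⟨v 0, v 1⟩)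
  simp only [cwAngle]
  split_ifs <;> constructor <;> linarith [Real.pi_pos]

def dirAngle (u : Pt) : ℝ := toIcoMod Real.two_pi_pos 0 (Complex.arg ⟨u 0, u 1⟩)

theorem dirAngle_mem_Ico (u : Pt) : dirAngle u ∈ Set.Ico 0 (2 * π) :=
  toIcoMod_mem_Ico' _ _

theorem cwAngle_eq_toIcoMod {u v : Pt} (hu : u ≠ 0) (hv : v ≠ 0) :
    cwAngle u v = toIcoMod Real.two_pi_pos 0 (dirAngle u - dirAngle v) := by
  have : Fact (0 < 2 * π) := ⟨Real.two_pi_pos⟩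
  have hmem := cwAngle_mem_Ico u v
  rw [← zero_add (2 * π)] at hmem
  refine (AddCircle.coe_eq_coe_iff_of_mem_Ico hmem (toIcoMod_mem_Ico _ _ _)).mp ?_
  change ((cwAngle u v : ℝ) : Real.Angle) =
    ((toIcoMod Real.two_pi_pos 0 (dirAngle u - dirAngle v) : ℝ) : Real.Angle)
  have hconj : (starRingEnd ℂ) ⟨v 0, v 1⟩ ≠ 0 := by simpa using complex_mk_ne_zero hv
  rw [Real.Angle.coe_toIcoMod, Real.Angle.coe_sub, dirAngle, dirAngle, Real.Angle.coe_toIcoMod,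
    Real.Angle.coe_toIcoMod, sub_eq_add_neg, ← Complex.arg_conj_coe_angle,
    ← Complex.arg_mul_coe_angle (complex_mk_ne_zero hu) hconj]
  simp only [cwAngle]
  split_ifs
  · rw [Real.Angle.coe_add, Real.Angle.coe_two_pi, add_zero]
  · rfl

theorem cwAngle_of_dirAngle_le {u v : Pt} (hu : u ≠ 0) (hv : v ≠ 0) (h : dirAngle v ≤ dirAngle u) :
    cwAngle u v = dirAngle u - dirAngle v := by
  rw [cwAngle_eq_toIcoMod hu hv, toIcoMod_eq_self]
  constructor <;> linarith [(dirAngle_mem_Ico u).2, (dirAngle_mem_Ico v).1]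

theorem cwAngle_of_dirAngle_lt {u v : Pt} (hu : u ≠ 0) (hv : v ≠ 0) (h : dirAngle u < dirAngle v) :
    cwAngle u v = dirAngle u - dirAngle v + 2 * π := by
  rw [cwAngle_eq_toIcoMod hu hv, toIcoMod_eq_iff]
  refine ⟨⟨?_, ?_⟩, -1, by simp⟩ <;> linarith [(dirAngle_mem_Ico u).1, (dirAngle_mem_Ico v).2]

section Energy

variable {n : ℕ} {r0 : ℝ} {v2 : ℝ → EReal} {v3 : ℝ → ℝ} {x : Fin n → Pt}

/- Since `EReal.toReal ⊤ = 0`, `pairTerm` represents the two-body part of `energy` only where the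
pair potential is finite (`energy_eq_coe`). -/
def pairTerm (v2 : ℝ → EReal) (x : Fin n → Pt) (i j : Fin n) : ℝ :=
  if j ≠ i then (v2 (dist (x i) (x j))).toReal else 0

def angleTerm (r0 : ℝ) (v3 : ℝ → ℝ) (x : Fin n → Pt) (i j k : Fin n) : ℝ :=
  if i ≠ j ∧ i ≠ k ∧ j ≠ k ∧ dist (x i) (x j) ≤ r0 ∧ dist (x i) (x k) ≤ r0
    then v3 (cwAngle (x j - x i) (x k - x i)) else 0

theorem pairTerm_comm (v2 : ℝ → EReal) (x : Fin n → Pt) (i j : Fin n) :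
    pairTerm v2 x i j = pairTerm v2 x j i := by
  simp only [pairTerm, ne_comm, dist_comm]

theorem pairTerm_self (v2 : ℝ → EReal) (x : Fin n → Pt) (i : Fin n) : pairTerm v2 x i i = 0 := by
  simp [pairTerm]

theorem angleTerm_nonneg (hv3 : ∀ θ ∈ Set.Icc 0 (2 * π), 0 ≤ v3 θ) (i j k : Fin n) :
    0 ≤ angleTerm r0 v3 x i j k := by
  unfold angleTerm
  split_ifs
  · exact hv3 _ (Set.Ico_subset_Icc_self (cwAngle_mem_Ico _ _))
  · exact le_rfl

theorem energy_eq_coe (hbot : ∀ r, 0 ≤ r → v2 r ≠ ⊥)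
    (htop : ∀ i j, j ≠ i → v2 (dist (x i) (x j)) ≠ ⊤) :
    energy r0 v2 v3 x = ((1 / 2 * ∑ i, ∑ j, pairTerm v2 x i j
      + 1 / 2 * ∑ i, ∑ j, ∑ k, angleTerm r0 v3 x i j k : ℝ) : EReal) := by
  have hpair : ∑ i, ∑ j, (if j ≠ i then v2 (dist (x i) (x j)) else 0)
      = ((∑ i, ∑ j, pairTerm v2 x i j : ℝ) : EReal) := by
    simp only [EReal.coe_finset_sum, pairTerm]
    refine sum_congr rfl fun i _ => sum_congr rfl fun j _ => ?_
    split_ifs with h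
    · exact (EReal.coe_toReal (htop i j h) (hbot _ dist_nonneg)).symm
    · rfl
  rw [energy, hpair, EReal.coe_add, EReal.coe_mul]
  rfl

theorem energy_eq_zero_of_pairwise_lt_dist (hzero : ∀ r, r0 ≤ r → v2 r = 0)
    (hx : Pairwise fun i j => r0 < dist (x i) (x j)) : energy r0 v2 v3 x = 0 := by
  have hpair (i j : Fin n) : (if j ≠ i then v2 (dist (x i) (x j)) else 0) = 0 := by
    split_ifs with h
    · exact hzero _ (hx h.symm).le
    · rfl
  have hangle (i j k : Fin n) : (if i ≠ j ∧ i ≠ k ∧ j ≠ k ∧ dist (x i) (x j) ≤ r0 ∧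
      dist (x i) (x k) ≤ r0 then v3 (cwAngle (x j - x i) (x k - x i)) else 0) = 0 :=
    if_neg fun ⟨hij, _, _, hd, _⟩ => (hx hij).not_ge hd
  simp [energy, hpair, hangle]

theorem IsMinimizer.v2_ne_top (hx : IsMinimizer r0 v2 v3 x) (hr0 : 0 ≤ r0)
    (hzero : ∀ r, r0 ≤ r → v2 r = 0) (hbot : ∀ r, 0 ≤ r → v2 r ≠ ⊥) {i j : Fin n} (hij : j ≠ i) :
    v2 (dist (x i) (x j)) ≠ ⊤ := by
  intro htop
  obtain ⟨z, hz⟩ := exists_pairwise_lt_dist Pt n r0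
  have hzinj : Function.Injective z := fun a b hab => by
    by_contra h
    linarith [hz h, dist_le_zero.mpr hab]
  have hterm (i j : Fin n) : (if j ≠ i then v2 (dist (x i) (x j)) else 0) ≠ ⊥ := by
    split_ifs
    · exact hbot _ dist_nonneg
    · exact EReal.zero_ne_bot
  have hsum : ∑ i, ∑ j, (if j ≠ i then v2 (dist (x i) (x j)) else 0) = ⊤ :=
    EReal.sum_eq_top_of_mem (fun i _ => EReal.sum_ne_bot fun j _ => hterm i j) (mem_univ i)
      (EReal.sum_eq_top_of_mem (fun j _ => hterm i j) (mem_univ j) (by rw [if_pos hij, htop]))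
  have hE := (hx.2 z hzinj).trans_eq (energy_eq_zero_of_pairwise_lt_dist hzero hz)
  rw [energy, hsum, EReal.mul_top_of_pos (by norm_num),
    EReal.top_add_of_ne_bot (EReal.coe_ne_bot _)] at hE
  exact absurd hE (by simp)

theorem v2_dist_update (hzero : ∀ r, r0 ≤ r → v2 r = 0) {i₀ : Fin n} {p : Pt}
    (hp : ∀ j, r0 < dist p (x j)) {i j : Fin n} (hij : i ≠ j) :
    v2 (dist (Function.update x i₀ p i) (Function.update x i₀ p j))
      = if i = i₀ ∨ j = i₀ then 0 else v2 (dist (x i) (x j)) := by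
  rcases eq_or_ne i i₀ with rfl | hi
  · simp [Function.update_of_ne hij.symm, hzero _ (hp j).le]
  rcases eq_or_ne j i₀ with rfl | hj
  · simp [Function.update_of_ne hij, dist_comm, hzero _ (hp i).le]
  simp [hi, hj]

theorem pairTerm_update (hzero : ∀ r, r0 ≤ r → v2 r = 0) {i₀ : Fin n} {p : Pt}
    (hp : ∀ j, r0 < dist p (x j)) (i j : Fin n) :
    pairTerm v2 (Function.update x i₀ p) i j
      = if i = i₀ ∨ j = i₀ then 0 else pairTerm v2 x i j := by
  rcases eq_or_ne j i with rfl | hji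
  · simp [pairTerm_self]
  · simp only [pairTerm, if_pos hji, v2_dist_update hzero hp hji.symm]
    split_ifs <;> simp

theorem angleTerm_update {i₀ : Fin n} {p : Pt} (hp : ∀ j, r0 < dist p (x j)) (i j k : Fin n) :
    angleTerm r0 v3 (Function.update x i₀ p) i j k
      = if i = i₀ ∨ j = i₀ ∨ k = i₀ then 0 else angleTerm r0 v3 x i j k := by
  split_ifs with h
  · refine if_neg fun ⟨hij, hik, _, hdj, hdk⟩ => ?_
    rcases h with rfl | rfl | rfl
    · rw [Function.update_self, Function.update_of_ne hij.symm] at hdj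
      linarith [hp j]
    · rw [Function.update_self, Function.update_of_ne hij, dist_comm] at hdj
      linarith [hp i]
    · rw [Function.update_self, Function.update_of_ne hik, dist_comm] at hdk
      linarith [hp i]
  · push Not at h
    simp only [angleTerm, Function.update_of_ne h.1, Function.update_of_ne h.2.1,
      Function.update_of_ne h.2.2]

theorem IsMinimizer.two_mul_sum_pairTerm_add_sum_angleTerm_nonpos (hx : IsMinimizer r0 v2 v3 x)
    (hr0 : 0 ≤ r0) (hzero : ∀ r, r0 ≤ r → v2 r = 0) (hbot : ∀ r, 0 ≤ r → v2 r ≠ ⊥)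
    (hv3 : ∀ θ ∈ Set.Icc 0 (2 * π), 0 ≤ v3 θ) (i₀ : Fin n) :
    2 * ∑ j, pairTerm v2 x i₀ j + ∑ j, ∑ k, angleTerm r0 v3 x i₀ j k ≤ 0 := by
  obtain ⟨p, hp⟩ := exists_forall_lt_dist x r0
  set y := Function.update x i₀ p
  have hyinj : Function.Injective y := hx.1.update_of_notMem_range i₀ fun ⟨j, hj⟩ => by
    linarith [hp j, dist_le_zero.mpr hj.symm]
  have hytop (i j : Fin n) (hij : j ≠ i) : v2 (dist (y i) (y j)) ≠ ⊤ := by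
    rw [v2_dist_update hzero hp hij.symm]
    split_ifs
    · exact EReal.zero_ne_top
    · exact hx.v2_ne_top hr0 hzero hbot hij
  have hle := hx.2 y hyinj
  rw [energy_eq_coe hbot (fun i j => hx.v2_ne_top hr0 hzero hbot), energy_eq_coe hbot hytop,
    EReal.coe_le_coe_iff] at hle
  simp only [y, pairTerm_update hzero hp, angleTerm_update hp] at hle
  have hpair := sum_sum_eq_sum_sum_ite_add (pairTerm v2 x) (pairTerm_comm v2 x) i₀
    (pairTerm_self v2 x i₀)
  have hangle := sum_sum_sum_ite_add_le (angleTerm r0 v3 x)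
    (fun _ _ _ => angleTerm_nonneg hv3 _ _ _) i₀
  linarith

end Energy

section Potentials

variable {ε r0 : ℝ} {v2 : ℝ → EReal} {v3 : ℝ → ℝ}

theorem V2Hyp.ne_bot (hv2 : V2Hyp ε r0 v2) {r : ℝ} (hr : 0 ≤ r) : v2 r ≠ ⊥ :=
  ne_bot_of_le_ne_bot (EReal.coe_ne_bot (-1)) (hv2.ge_neg_one r hr)

theorem V3Hyp.nonneg (hv3 : V3Hyp ε v3) {θ : ℝ} (hθ : θ ∈ Set.Icc 0 (2 * π)) : 0 ≤ v3 θ := by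
  by_cases hzero : θ ∈ ({π / 2, π, 3 * π / 2} : Set ℝ)
  · rcases hzero with rfl | rfl | rfl
    exacts [hv3.zero_pi_half.ge, hv3.zero_pi.ge, hv3.zero_three_pi_half.ge]
  · exact (hv3.pos θ hθ.1 hθ.2 hzero).le

theorem le_of_mem_goodAngles {θ : ℝ} (h : θ ∈ goodAngles ε) : π / 2 - ε ≤ θ := by
  rcases h with (h | h) | h <;> linarith [h.1, Real.pi_pos]

theorem V3Hyp.twelve_lt (hv3 : V3Hyp ε v3) (hε : 0 ≤ ε) (hε1 : ε < 1) {θ : ℝ}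
    (hθ : θ ∈ Set.Icc 0 (2 * π)) (hbad : θ ∉ goodAngles ε) : 12 < v3 θ := by
  refine lt_of_le_of_lt ?_ (hv3.large θ hθ.1 hθ.2 hbad)
  have hsqrt : (5 / 4 : ℝ) ≤ √2 := Real.le_sqrt_of_sq_le (by norm_num)
  have hfour : 4 ≤ 4 / (1 - ε) ^ 2 := by
    rw [le_div_iff₀ (by nlinarith)]
    nlinarith
  nlinarith [sq_nonneg (√2 + 1 / 2)]

theorem neg_one_le_pairTerm (hv2 : V2Hyp ε r0 v2) {n : ℕ} (x : Fin n → Pt) (i j : Fin n) :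
    -1 ≤ pairTerm v2 x i j := by
  unfold pairTerm
  split_ifs
  · rcases eq_or_ne (v2 (dist (x i) (x j))) ⊤ with htop | htop
    · simp [htop]
    · simpa using EReal.toReal_le_toReal (hv2.ge_neg_one _ dist_nonneg) (EReal.coe_ne_bot (-1)) htop
  · norm_num

theorem inv_lt_pairTerm (hv2 : V2Hyp ε r0 v2) {n : ℕ} {x : Fin n → Pt} {i j : Fin n} (hij : j ≠ i)
    (htop : v2 (dist (x i) (x j)) ≠ ⊤) (hd : dist (x i) (x j) ≤ 1 - ε) :
    ε⁻¹ < pairTerm v2 x i j := by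
  rw [pairTerm, if_pos hij, ← EReal.coe_lt_coe_iff,
    EReal.coe_toReal htop (hv2.ne_bot dist_nonneg)]
  exact hv2.repulsive _ dist_nonneg hd

end Potentials

section Neighbors

variable {n : ℕ} {ε r0 : ℝ} {v2 : ℝ → EReal} {v3 : ℝ → ℝ} {x : Fin n → Pt}

def neighbors (r0 : ℝ) (x : Fin n → Pt) (i : Fin n) : Finset (Fin n) :=
  {j | j ≠ i ∧ dist (x i) (x j) ≤ r0}

theorem mem_neighbors {i j : Fin n} : j ∈ neighbors r0 x i ↔ j ≠ i ∧ dist (x i) (x j) ≤ r0 := by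
  simp [neighbors]

theorem sub_ne_zero_of_mem_neighbors (hx : Function.Injective x) {i j : Fin n}
    (hj : j ∈ neighbors r0 x i) :
    x j - x i ≠ 0 :=
  sub_ne_zero.mpr fun h => (mem_neighbors.mp hj).1 (hx h)

theorem sum_pairTerm_eq_sum_neighbors (hzero : ∀ r, r0 ≤ r → v2 r = 0) (i : Fin n) :
    ∑ j, pairTerm v2 x i j = ∑ j ∈ neighbors r0 x i, pairTerm v2 x i j := by
  refine (sum_subset (subset_univ _) fun j _ hj => ?_).symm
  rcases eq_or_ne j i with rfl | hji
  · exact pairTerm_self v2 x j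
  · have hd : r0 < dist (x i) (x j) := not_le.mp fun hd => hj (mem_neighbors.mpr ⟨hji, hd⟩)
    simp [pairTerm, hji, hzero _ hd.le]

theorem neg_card_neighbors_le_sum_pairTerm (hv2 : V2Hyp ε r0 v2) (i : Fin n) :
    -(#(neighbors r0 x i) : ℝ) ≤ ∑ j, pairTerm v2 x i j := by
  rw [sum_pairTerm_eq_sum_neighbors hv2.eq_zero]
  simpa using card_nsmul_le_sum _ _ _ fun j _ => neg_one_le_pairTerm hv2 x i j

theorem angleTerm_of_mem_neighbors {i j k : Fin n} (hj : j ∈ neighbors r0 x i)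
    (hk : k ∈ neighbors r0 x i) (hjk : j ≠ k) :
    angleTerm r0 v3 x i j k = v3 (cwAngle (x j - x i) (x k - x i)) := by
  rw [mem_neighbors] at hj hk
  exact if_pos ⟨hj.1.symm, hk.1.symm, hjk, hj.2, hk.2⟩

theorem twelve_lt_sum_angleTerm (hv3 : V3Hyp ε v3) (hε : 0 ≤ ε) (hε1 : ε < 1) {i j k : Fin n}
    (hj : j ∈ neighbors r0 x i) (hk : k ∈ neighbors r0 x i) (hjk : j ≠ k)
    (hbad : cwAngle (x j - x i) (x k - x i) ∉ goodAngles ε) :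
    12 < ∑ k, angleTerm r0 v3 x i j k := by
  have hmem := Set.Ico_subset_Icc_self (cwAngle_mem_Ico (x j - x i) (x k - x i))
  calc (12 : ℝ) < angleTerm r0 v3 x i j k := by
        rw [angleTerm_of_mem_neighbors hj hk hjk]
        exact hv3.twelve_lt hε hε1 hmem hbad
    _ ≤ ∑ k, angleTerm r0 v3 x i j k :=
        single_le_sum (fun k _ => angleTerm_nonneg (fun _ => hv3.nonneg) i j k) (mem_univ k)

end Neighbors

section Minimizers

variable {n : ℕ} {ε r0 : ℝ} {v2 : ℝ → EReal} {v3 : ℝ → ℝ} {x : Fin n → Pt}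

theorem IsMinimizer.card_neighbors_le_five (hx : IsMinimizer r0 v2 v3 x) (hv2 : V2Hyp ε r0 v2)
    (hv3 : V3Hyp ε v3) (hε : 0 ≤ ε) (hε4 : ε ≤ 1 / 4) (hr0 : 0 ≤ r0) (i : Fin n) :
    #(neighbors r0 x i) ≤ 5 := by
  set a : Fin n → ℝ := fun j => dirAngle (x j - x i)
  obtain ⟨t, htN, hcard, ht⟩ := exists_large_subset_with_near_lower (neighbors r0 x i) a
    (c := 0) (δ := 2 * π / 5) (k := 5) (by positivity)
    (fun j _ => by simpa [mul_div_cancel₀] using dirAngle_mem_Ico (x j - x i))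
  have hbad (j) (hj : j ∈ t) : 12 < ∑ k, angleTerm r0 v3 x i j k := by
    obtain ⟨k, hk, hkj, hle, hlt⟩ := ht j hj
    refine twelve_lt_sum_angleTerm hv3 hε (by linarith) (htN hj) hk hkj.symm fun hgood => ?_
    rw [cwAngle_of_dirAngle_le (sub_ne_zero_of_mem_neighbors hx.1 (htN hj))
      (sub_ne_zero_of_mem_neighbors hx.1 hk) hle] at hgood
    linarith [le_of_mem_goodAngles hgood, Real.pi_gt_three]
  by_contra! hsix
  have htne : t.Nonempty := card_pos.mp (by omega)
  have hangle : (#t : ℝ) * 12 < ∑ j, ∑ k, angleTerm r0 v3 x i j k :=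
    calc (#t : ℝ) * 12 = ∑ j ∈ t, 12 := by simp
      _ < ∑ j ∈ t, ∑ k, angleTerm r0 v3 x i j k := sum_lt_sum_of_nonempty htne hbad
      _ ≤ _ := sum_le_sum_of_subset_of_nonneg (subset_univ _) fun j _ _ =>
        sum_nonneg fun k _ => angleTerm_nonneg (fun _ => hv3.nonneg) i j k
  have hsite := hx.two_mul_sum_pairTerm_add_sum_angleTerm_nonpos hr0 hv2.eq_zero
    (fun _ => hv2.ne_bot) (fun _ => hv3.nonneg) i
  have hpair := neg_card_neighbors_le_sum_pairTerm (x := x) hv2 i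
  have hcard' : (#(neighbors r0 x i) : ℝ) ≤ #t + 5 := by exact_mod_cast hcard
  have hsix' : (6 : ℝ) ≤ #(neighbors r0 x i) := by exact_mod_cast hsix
  linarith

theorem IsMinimizer.one_sub_lt_dist (hx : IsMinimizer r0 v2 v3 x) (hv2 : V2Hyp ε r0 v2)
    (hv3 : V3Hyp ε v3) (hε : 0 < ε) (hε4 : ε ≤ 1 / 4) (hr0 : 1 < r0) {i j : Fin n} (hij : i ≠ j) :
    1 - ε < dist (x i) (x j) := by
  by_contra! hd
  have hj : j ∈ neighbors r0 x i := mem_neighbors.mpr ⟨hij.symm, by linarith⟩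
  have hpair_ij := inv_lt_pairTerm hv2 hij.symm
    (hx.v2_ne_top (by linarith) hv2.eq_zero (fun _ => hv2.ne_bot) hij.symm) hd
  have hpair : pairTerm v2 x i j + 1 - #(neighbors r0 x i) ≤ ∑ j, pairTerm v2 x i j := by
    have := single_le_sum (f := fun k => pairTerm v2 x i k + 1)
      (fun k _ => by linarith [neg_one_le_pairTerm hv2 x i k]) hj
    rw [sum_pairTerm_eq_sum_neighbors hv2.eq_zero]
    simp only [sum_add_distrib, sum_const, nsmul_eq_mul, mul_one] at this
    linarith
  have hangle : 0 ≤ ∑ j, ∑ k, angleTerm r0 v3 x i j k :=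
    sum_nonneg fun j _ => sum_nonneg fun k _ => angleTerm_nonneg (fun _ => hv3.nonneg) i j k
  have hsite := hx.two_mul_sum_pairTerm_add_sum_angleTerm_nonpos (by linarith) hv2.eq_zero
    (fun _ => hv2.ne_bot) (fun _ => hv3.nonneg) i
  have hfive : (#(neighbors r0 x i) : ℝ) ≤ 5 := by
    exact_mod_cast hx.card_neighbors_le_five hv2 hv3 hε.le hε4 (by linarith) i
  have hinv : 4 ≤ ε⁻¹ := by rw [le_inv_comm₀ (by norm_num) hε]; linarith
  linarith

theorem IsMinimizer.cwAngle_mem_goodAngles (hx : IsMinimizer r0 v2 v3 x) (hv2 : V2Hyp ε r0 v2)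
    (hv3 : V3Hyp ε v3) (hε : 0 ≤ ε) (hε4 : ε ≤ 1 / 4) (hr0 : 0 ≤ r0) {i j k : Fin n}
    (hj : j ∈ neighbors r0 x i) (hk : k ∈ neighbors r0 x i) (hjk : j ≠ k) :
    cwAngle (x j - x i) (x k - x i) ∈ goodAngles ε := by
  by_contra hbad
  have hangle : 12 < ∑ j, ∑ k, angleTerm r0 v3 x i j k :=
    (twelve_lt_sum_angleTerm hv3 hε (by linarith) hj hk hjk hbad).trans_le <|
      single_le_sum (fun j _ => sum_nonneg fun k _ => angleTerm_nonneg (fun _ => hv3.nonneg) i j k)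
        (mem_univ j)
  have hsite := hx.two_mul_sum_pairTerm_add_sum_angleTerm_nonpos hr0 hv2.eq_zero
    (fun _ => hv2.ne_bot) (fun _ => hv3.nonneg) i
  have hpair := neg_card_neighbors_le_sum_pairTerm (x := x) hv2 i
  have hfive : (#(neighbors r0 x i) : ℝ) ≤ 5 := by
    exact_mod_cast hx.card_neighbors_le_five hv2 hv3 hε hε4 hr0 i
  linarith

theorem IsMinimizer.card_neighbors_le_four (hx : IsMinimizer r0 v2 v3 x) (hv2 : V2Hyp ε r0 v2)
    (hv3 : V3Hyp ε v3) (hε : 0 ≤ ε) (hε4 : ε ≤ 1 / 4) (hr0 : 0 ≤ r0) (i : Fin n) :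
    #(neighbors r0 x i) ≤ 4 := by
  set a : Fin n → ℝ := fun j => dirAngle (x j - x i)
  have hsep : ∀ j ∈ neighbors r0 x i, ∀ k ∈ neighbors r0 x i, j ≠ k → a j ≤ a k →
      π / 2 - ε ≤ a k - a j :=
    fun j hj k hk hjk hle => by
      have := hx.cwAngle_mem_goodAngles hv2 hv3 hε hε4 hr0 hk hj hjk.symm
      rw [cwAngle_of_dirAngle_le (sub_ne_zero_of_mem_neighbors hx.1 hk)
        (sub_ne_zero_of_mem_neighbors hx.1 hj) hle] at this
      exact le_of_mem_goodAngles this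
  rcases (neighbors r0 x i).eq_empty_or_nonempty with hempty | hne
  · simp [hempty]
  obtain ⟨j₀, hj₀, hmin⟩ := exists_min_image _ a hne
  refine card_le_of_forall_le_sub _ a (c := a j₀) (by linarith [Real.pi_gt_three])
    (fun j hj => ⟨hmin j hj, ?_⟩) hsep
  rcases eq_or_ne j j₀ with rfl | hjj₀
  · push_cast; linarith [Real.pi_gt_three]
  have hlt : a j₀ < a j := by linarith [hsep j₀ hj₀ j hj hjj₀.symm (hmin j hj), Real.pi_gt_three]
  have := hx.cwAngle_mem_goodAngles hv2 hv3 hε hε4 hr0 hj₀ hj hjj₀.symm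
  rw [cwAngle_of_dirAngle_lt (sub_ne_zero_of_mem_neighbors hx.1 hj₀)
    (sub_ne_zero_of_mem_neighbors hx.1 hj) hlt] at this
  push_cast
  linarith [le_of_mem_goodAngles this, Real.pi_gt_three]

end Minimizers

section NaturalBondGraph

variable {n : ℕ} {r0 : ℝ} {x : Fin n → Pt} {hx : Function.Injective x}

theorem exists_mem_neighbors_of_mem_natGraph {a b : Pt} (h : s(a, b) ∈ (natGraph r0 x hx).E) :
    ∃ i, ∃ j ∈ neighbors r0 x i, x i = a ∧ x j = b := by
  obtain ⟨i, j, hij, hd, he⟩ := h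
  rcases Sym2.eq_iff.mp he with ⟨rfl, rfl⟩ | ⟨rfl, rfl⟩
  · exact ⟨i, j, mem_neighbors.mpr ⟨hij.symm, hd⟩, rfl, rfl⟩
  · exact ⟨j, i, mem_neighbors.mpr ⟨hij, dist_comm (x i) (x j) ▸ hd⟩, rfl, rfl⟩

theorem deg_natGraph_le (i : Fin n) : deg (natGraph r0 x hx) (x i) ≤ #(neighbors r0 x i) := by
  have hsub : nbhd (natGraph r0 x hx) (x i) ⊆ x '' neighbors r0 x i := fun q hq => by
    obtain ⟨i', j, hj, hi', rfl⟩ := exists_mem_neighbors_of_mem_natGraph (hx := hx) hq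
    exact ⟨j, hx hi' ▸ hj, rfl⟩
  calc deg (natGraph r0 x hx) (x i) ≤ (x '' neighbors r0 x i).ncard :=
        Set.ncard_le_ncard hsub ((neighbors r0 x i).finite_toSet.image x)
    _ ≤ #(neighbors r0 x i) := by
        simpa using Set.ncard_image_le (f := x) (neighbors r0 x i).finite_toSet

end NaturalBondGraph

/-- **Elementary properties of minimizers.** There is `ε₀ ∈ (0, π/6)` such that for all
admissible potentials, the natural bond graph of every minimizer is `ε`-regular, and every
vertex has at most `4` neighbors. -/
theorem natural_bond_graph_of_minimizer :
    ∃ ε₀ : ℝ, 0 < ε₀ ∧ ε₀ < π / 6 ∧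
      ∀ ε : ℝ, 0 < ε → ε < ε₀ →
      ∀ r0 : ℝ, 1 < r0 → r0 < Real.sqrt 2 →
      ∀ (v2 : ℝ → EReal) (v3 : ℝ → ℝ), V2Hyp ε r0 v2 → V3Hyp ε v3 →
      ∀ (n : ℕ) (x : Fin n → Pt) (hx : Function.Injective x),
      (∀ y : Fin n → Pt, Function.Injective y → energy r0 v2 v3 x ≤ energy r0 v2 v3 y) →
      EpsRegular ε (natGraph r0 x hx) ∧
        ∀ p ∈ (natGraph r0 x hx).V, deg (natGraph r0 x hx) p ≤ 4 := by
  refine ⟨1 / 4, by norm_num, by linarith [Real.pi_gt_three], ?_⟩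
  intro ε hε hε4 r0 hr0 _ v2 v3 hv2 hv3 n x hx hopt
  have hmin : IsMinimizer r0 v2 v3 x := ⟨hx, hopt⟩
  refine ⟨⟨fun a b hab => ?_, fun a b c hab hcb hac => ?_⟩, ?_⟩
  · obtain ⟨i, j, hj, rfl, rfl⟩ := exists_mem_neighbors_of_mem_natGraph hab
    exact (hmin.one_sub_lt_dist hv2 hv3 hε hε4.le hr0 (mem_neighbors.mp hj).1.symm).le
  · rw [Sym2.eq_swap] at hab hcb
    obtain ⟨i, j, hj, rfl, rfl⟩ := exists_mem_neighbors_of_mem_natGraph hab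
    obtain ⟨i', k, hk, hi', rfl⟩ := exists_mem_neighbors_of_mem_natGraph hcb
    rw [hx hi'] at hk
    exact hmin.cwAngle_mem_goodAngles hv2 hv3 hε.le hε4.le (by linarith) hj hk
      fun h => hac (congrArg x h)
  · rintro _ ⟨i, rfl⟩
    exact (deg_natGraph_le i).trans
      (hmin.card_neighbors_le_four hv2 hv3 hε.le hε4.le (by linarith) i)

end
end

section
/- Let ε ∈ (0, π/6) and let G = (V,E) be an ε-regular graph. If θ_ex(γ) < 3π/2 − ε for every straight path γ of G, then every straight path of G is open. -/
open scoped Real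

noncomputable section

/-- The `i`-th vertex of a path (with junk value `0` out of range). -/
def nth (γ : List Pt) (i : ℕ) : Pt := γ.getD i 0

/-- The interior angle `θ_{i+2} = θ_{x_{i+2}, x_{i+1}, x_i}` of a path (`0`-based). -/
noncomputable def pathAngle (γ : List Pt) (i : ℕ) : ℝ :=
  cwAngle (nth γ (i + 2) - nth γ (i + 1)) (nth γ i - nth γ (i + 1))

/-- The list of (unordered) edges of a path. -/
def pathEdges (γ : List Pt) : List (Sym2 Pt) := (γ.zip γ.tail).map (fun p => s(p.1, p.2))

/-- A straight path of the graph `G`. -/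
def IsStraightPath (ε : ℝ) (G : BondGraph) (γ : List Pt) : Prop :=
  2 ≤ γ.length ∧
  (∀ x ∈ γ, x ∈ G.V) ∧
  γ.Chain' (fun a b => s(a, b) ∈ G.E) ∧
  (∀ i : ℕ, i + 2 < γ.length → pathAngle γ i ∈ Set.Icc (π - ε) (π + ε)) ∧
  (pathEdges γ).Nodup

/-- A path is closed if its first and last points coincide. -/
def IsClosedPath (γ : List Pt) : Prop := γ.head? = γ.getLast?

/-- The angle excess `θ_ex(γ)` of a path. -/
noncomputable def thetaEx (γ : List Pt) : ℝ :=
  ∑ i ∈ Finset.range (γ.length - 2), |pathAngle γ i - π|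

/-- Two lists are identified if they agree up to reversal. -/
def revSetoid : Setoid (List Pt) where
  r a b := a = b ∨ a = b.reverse
  iseqv := by
    constructor
    · intro a; exact Or.inl rfl
    · intro a b h
      rcases h with h | h
      · exact Or.inl h.symm
      · right; rw [h, List.reverse_reverse]
    · intro a b c hab hbc
      rcases hab with h | h <;> rcases hbc with h' | h' <;>
        simp [h, h', List.reverse_reverse]

/-- An (undirected) stratum: a list of points up to reversal. -/
def Stratum : Type := Quotient revSetoid

/-- The length `l(s)` of a stratum. -/
def Stratum.len : Stratum → ℕ :=
  Quotient.lift List.length (by rintro a b (rfl | rfl) <;> simp)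

/-- The set of vertices of a stratum. -/
def Stratum.verts : Stratum → Set Pt :=
  Quotient.lift (fun l => {x : Pt | x ∈ l}) (by
    rintro a b (rfl | rfl)
    · rfl
    · ext x; simp)

/-- `γ` is a subpath of `γ'`, up to reversal. -/
def SubPathUpToRev (γ γ' : List Pt) : Prop := γ <:+: γ' ∨ γ <:+: γ'.reverse

/-- A maximal straight path (maximal with respect to inclusion). -/
def IsMaximalStraight (ε : ℝ) (G : BondGraph) (γ : List Pt) : Prop :=
  IsStraightPath ε G γ ∧
    ∀ γ' : List Pt, IsStraightPath ε G γ' → SubPathUpToRev γ γ' →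
      (γ' = γ ∨ γ' = γ.reverse)

/-- `x ∈ V₂^π`: a vertex of degree two whose bond angle lies in `[π−ε, π+ε]`. -/
def V2pi (ε : ℝ) (G : BondGraph) (x : Pt) : Prop :=
  x ∈ G.V ∧ ∃ x₁ x₂ : Pt, x₁ ≠ x₂ ∧ nbhd G x = {x₁, x₂} ∧
    cwAngle (x₁ - x) (x₂ - x) ∈ Set.Icc (π - ε) (π + ε)

/-- The set of strata `S(G)`: maximal straight paths, together with the degenerate
one-point stratum `(x)` counted twice for `x ∈ V₀` and once for `x ∈ V₁ ∪ V₂^π`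
(the `Fin 2` tag realizes the multiplicity). -/
def strataSet (ε : ℝ) (G : BondGraph) : Set (Stratum × Fin 2) :=
  {p | ∃ γ : List Pt, IsMaximalStraight ε G γ ∧ p = (Quotient.mk revSetoid γ, 0)}
  ∪ {p | ∃ x ∈ G.V, deg G x = 0 ∧
      (p = (Quotient.mk revSetoid [x], 0) ∨ p = (Quotient.mk revSetoid [x], 1))}
  ∪ {p | ∃ x ∈ G.V, (deg G x = 1 ∨ V2pi ε G x) ∧ p = (Quotient.mk revSetoid [x], 0)}

/-- The set of orthogonal strata `S^⊥(s)`. -/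
def orthStrata (ε : ℝ) (G : BondGraph) (s : Stratum × Fin 2) : Set (Stratum × Fin 2) :=
  {s' | s' ∈ strataSet ε G ∧ s' ≠ s ∧ (Stratum.verts s.1 ∩ Stratum.verts s'.1).Nonempty}

/-! A closed straight path `x₀, …, x_{N+1} = x₀` has edge vectors `uⱼ = x_{j+1} - xⱼ` whose
directions are `arg u₀ + σⱼ`, where `σⱼ` is the sum of the first `j` turning angles
`θᵢ - π`. Since the `uⱼ` sum to zero they do not lie in an open half-plane, so the `σⱼ` spread
over at least `π`; and `σ_N` agrees modulo `2π` with `θ - π` for the bond angle `θ` at the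
closing vertex, and `|θ - π| ≤ π/2 + ε` by `ε`-regularity. Running from `σ₀ = 0` through the
two extreme values to `σ_N` therefore costs a total variation of at least `3π/2 - ε`. -/

open Complex ComplexConjugate Finset

theorem two_mul_dist_le_sum_dist_add {α : Type*} [PseudoMetricSpace α] (f : ℕ → α) {N a b : ℕ}
    (ha : a ≤ N) (hb : b ≤ N) :
    2 * dist (f a) (f b) ≤ ∑ i ∈ range N, dist (f i) (f (i + 1)) + dist (f 0) (f N) := by
  wlog hab : a ≤ b generalizing a b
  · simpa only [dist_comm (f a)] using this hb ha (by omega)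
  have hsplit : ∑ i ∈ range N, dist (f i) (f (i + 1)) = ∑ i ∈ Ico 0 a, dist (f i) (f (i + 1)) +
      ∑ i ∈ Ico a b, dist (f i) (f (i + 1)) + ∑ i ∈ Ico b N, dist (f i) (f (i + 1)) := by
    rw [sum_Ico_consecutive _ (Nat.zero_le a) hab, sum_Ico_consecutive _ (Nat.zero_le b) hb,
      range_eq_Ico]
  have h0a := dist_le_Ico_sum_dist f (Nat.zero_le a)
  have hmid := dist_le_Ico_sum_dist f hab
  have hbN := dist_le_Ico_sum_dist f hb
  have htri := dist_triangle4 (f a) (f 0) (f N) (f b)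
  rw [dist_comm (f a) (f 0), dist_comm (f N) (f b)] at htri
  linarith

theorem Real.Angle.abs_le_or_le_abs_of_coe_eq {x y c : ℝ} (h : (x : Real.Angle) = y)
    (hy : |y| ≤ c) : |x| ≤ c ∨ 2 * π - c ≤ |x| := by
  obtain ⟨k, hk⟩ := Real.Angle.angle_eq_iff_two_pi_dvd_sub.mp h
  rcases eq_or_ne k 0 with rfl | hk0
  · left
    rwa [show x = y by simpa [sub_eq_zero] using hk]
  · right
    have hk1 : (1 : ℝ) ≤ |(k : ℝ)| := by exact_mod_cast Int.one_le_abs hk0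
    have h2π : 2 * π ≤ |x - y| := by
      rw [hk, abs_mul, abs_of_pos Real.two_pi_pos]
      nlinarith [Real.pi_pos]
    linarith [abs_sub x y]

theorem Complex.re_pos_of_coe_arg_eq {z : ℂ} {θ : ℝ} (hz : z ≠ 0) (h : (arg z : Real.Angle) = θ)
    (hθ : |θ| < π / 2) : 0 < z.re := by
  have hcos : Real.cos (arg z) = Real.cos θ := by
    rw [← Real.Angle.cos_coe, h, Real.Angle.cos_coe]
  rw [← norm_mul_cos_arg, hcos]
  exact mul_pos (norm_pos_iff.mpr hz) (Real.cos_pos_of_mem_Ioo (abs_lt.mp hθ))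

theorem Complex.sum_ne_zero_of_coe_arg_eq {ι : Type*} {s : Finset ι} (hs : s.Nonempty)
    {z : ι → ℂ} (hz : ∀ j ∈ s, z j ≠ 0) (φ : ℝ) {σ : ι → ℝ}
    (harg : ∀ j ∈ s, (arg (z j) : Real.Angle) = φ + σ j) (hσ : ∀ j ∈ s, |σ j| < π / 2) :
    ∑ j ∈ s, z j ≠ 0 := by
  have hw : exp (φ * I) ≠ 0 := exp_ne_zero _
  have hargw : (arg (exp (φ * I)) : Real.Angle) = φ := by
    simpa [Real.Angle.cos_coe, Real.Angle.sin_coe, ← exp_mul_I] using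
      arg_cos_add_sin_mul_I_coe_angle (φ : Real.Angle)
  have hre : 0 < (∑ j ∈ s, z j / exp (φ * I)).re := by
    rw [re_sum]
    refine sum_pos (fun j hj => re_pos_of_coe_arg_eq (div_ne_zero (hz j hj) hw) ?_ (hσ j hj)) hs
    rw [arg_div_coe_angle (hz j hj) hw, harg j hj, hargw, add_sub_cancel_left]
  intro h0
  simp [← sum_div, h0] at hre

theorem Complex.exists_pi_le_sub_of_sum_eq_zero {ι : Type*} {s : Finset ι} (hs : s.Nonempty)
    {z : ι → ℂ} (hz : ∀ j ∈ s, z j ≠ 0) (φ : ℝ) {σ : ι → ℝ}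
    (harg : ∀ j ∈ s, (arg (z j) : Real.Angle) = φ + σ j) (hsum : ∑ j ∈ s, z j = 0) :
    ∃ a ∈ s, ∃ b ∈ s, π ≤ σ a - σ b := by
  obtain ⟨a, ha, hmax⟩ := s.exists_max_image σ hs
  obtain ⟨b, hb, hmin⟩ := s.exists_min_image σ hs
  refine ⟨a, ha, b, hb, ?_⟩
  by_contra! hlt
  set c := (σ a + σ b) / 2 with hc
  refine sum_ne_zero_of_coe_arg_eq hs hz (φ + c) (σ := fun j => σ j - c) (fun j hj => ?_)
    (fun j hj => ?_) hsum
  · rw [harg j hj, ← Real.Angle.coe_add, ← Real.Angle.coe_add, add_add_sub_cancel]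
  · have := hmax j hj
    have := hmin j hj
    rw [abs_lt]
    constructor <;> linarith [hc]

theorem abs_sub_pi_le_of_mem_goodAngles {θ ε : ℝ} (h : θ ∈ goodAngles ε) :
    |θ - π| ≤ π / 2 + ε := by
  have := Real.pi_pos
  rcases h with (h | h) | h <;> rw [abs_le] <;> constructor <;> linarith [h.1, h.2]

def toComplex (p : Pt) : ℂ := ⟨p 0, p 1⟩

theorem toComplex_sub (p q : Pt) : toComplex (p - q) = toComplex p - toComplex q := by
  simp [toComplex, Complex.ext_iff]

theorem toComplex_ne_zero {p : Pt} (hp : p ≠ 0) : toComplex p ≠ 0 := by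
  contrapose! hp
  rw [Complex.ext_iff] at hp
  ext i
  fin_cases i
  exacts [hp.1, hp.2]

theorem coe_cwAngle {u v : Pt} (hu : u ≠ 0) (hv : v ≠ 0) :
    (cwAngle u v : Real.Angle) = arg (toComplex u) - arg (toComplex v) := by
  have key : (arg (toComplex u * conj (toComplex v)) : Real.Angle) =
      arg (toComplex u) - arg (toComplex v) := by
    rw [arg_mul_coe_angle (toComplex_ne_zero hu) ((map_ne_zero _).mpr (toComplex_ne_zero hv)),
      arg_conj_coe_angle, sub_eq_add_neg]
  unfold cwAngle
  dsimp only
  split_ifs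
  · rw [Real.Angle.coe_add, Real.Angle.coe_two_pi, add_zero]
    exact key
  · exact key

theorem IsClosedPath.nth_zero_eq {γ : List Pt} (h : IsClosedPath γ) :
    nth γ 0 = nth γ (γ.length - 1) := by
  cases γ with
  | nil => rfl
  | cons x l =>
    rw [IsClosedPath, List.head?_cons, List.getLast?_eq_some_getLast (List.cons_ne_nil x l),
      Option.some_inj, List.getLast_eq_getElem] at h
    rw [nth, nth, List.getD_eq_getElem _ _ (by simp), List.getD_eq_getElem _ _ (by simp)]
    exact h

def edgeVec (γ : List Pt) (i : ℕ) : ℂ := toComplex (nth γ (i + 1) - nth γ i)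

def turningSum (γ : List Pt) (j : ℕ) : ℝ := ∑ i ∈ range j, (pathAngle γ i - π)

/-- The bond angle at the vertex `x₀ = x_{N+1}` of a closed path `x₀, …, x_{N+1}`. -/
def closingAngle (γ : List Pt) : ℝ :=
  cwAngle (nth γ (γ.length - 2) - nth γ 0) (nth γ 1 - nth γ 0)

theorem sum_edgeVec_eq_zero {γ : List Pt} (hcl : IsClosedPath γ) :
    ∑ j ∈ range (γ.length - 1), edgeVec γ j = 0 := by
  simp only [edgeVec, toComplex_sub]
  rw [sum_range_sub (fun j => toComplex (nth γ j)), ← hcl.nth_zero_eq, sub_self]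

theorem thetaEx_eq_sum_dist (γ : List Pt) :
    thetaEx γ = ∑ i ∈ range (γ.length - 2), dist (turningSum γ i) (turningSum γ (i + 1)) := by
  refine sum_congr rfl fun i _ => ?_
  rw [turningSum, turningSum, sum_range_succ, Real.dist_eq, sub_add_cancel_left, abs_neg]

namespace IsStraightPath

variable {ε : ℝ} {G : BondGraph} {γ : List Pt}

theorem mem_E (hγ : IsStraightPath ε G γ) {i : ℕ} (hi : i + 1 < γ.length) :
    s(nth γ i, nth γ (i + 1)) ∈ G.E := by
  rw [nth, nth, List.getD_eq_getElem γ 0 (by omega), List.getD_eq_getElem γ 0 hi]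
  exact List.isChain_iff_getElem.mp hγ.2.2.1 i hi

theorem nth_ne_nth_succ (hγ : IsStraightPath ε G γ) {i : ℕ} (hi : i + 1 < γ.length) :
    nth γ i ≠ nth γ (i + 1) :=
  fun h => G.not_diag _ (hγ.mem_E hi) (Sym2.mk_isDiag_iff.mpr h)

theorem eq_of_edge_eq (hγ : IsStraightPath ε G γ) {i j : ℕ} (hi : i + 1 < γ.length)
    (hj : j + 1 < γ.length) (h : s(nth γ i, nth γ (i + 1)) = s(nth γ j, nth γ (j + 1))) :
    i = j := by
  have hedge : ∀ k (hk : k + 1 < γ.length),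
      (pathEdges γ)[k]'(by simp [pathEdges]; omega) = s(nth γ k, nth γ (k + 1)) := by
    intro k hk
    rw [nth, nth, List.getD_eq_getElem γ 0 (by omega), List.getD_eq_getElem γ 0 hk]
    simp [pathEdges]
  exact (hγ.2.2.2.2.getElem_inj_iff).mp ((hedge i hi).trans (h.trans (hedge j hj).symm))

theorem three_le_length (hγ : IsStraightPath ε G γ) (hcl : IsClosedPath γ) :
    3 ≤ γ.length := by
  by_contra! h
  have h2 : γ.length = 2 := by have := hγ.1; omega
  exact hγ.nth_ne_nth_succ (i := 0) (by omega) (by rw [hcl.nth_zero_eq, h2])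

theorem edgeVec_ne_zero (hγ : IsStraightPath ε G γ) {i : ℕ} (hi : i + 1 < γ.length) :
    edgeVec γ i ≠ 0 :=
  toComplex_ne_zero (sub_ne_zero.mpr (hγ.nth_ne_nth_succ hi).symm)

theorem coe_pathAngle_sub_pi (hγ : IsStraightPath ε G γ) {i : ℕ} (hi : i + 2 < γ.length) :
    ((pathAngle γ i - π : ℝ) : Real.Angle) = arg (edgeVec γ (i + 1)) - arg (edgeVec γ i) := by
  have hback : toComplex (nth γ i - nth γ (i + 1)) = -edgeVec γ i := by
    rw [edgeVec, toComplex_sub, toComplex_sub, neg_sub]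
  have hfwd : nth γ (i + 2) - nth γ (i + 1) ≠ 0 :=
    sub_ne_zero.mpr (hγ.nth_ne_nth_succ (i := i + 1) hi).symm
  have hbwd : nth γ i - nth γ (i + 1) ≠ 0 := sub_ne_zero.mpr (hγ.nth_ne_nth_succ (by omega))
  rw [Real.Angle.coe_sub, pathAngle, coe_cwAngle hfwd hbwd, hback,
    arg_neg_coe_angle (hγ.edgeVec_ne_zero (by omega)), sub_sub, add_assoc,
    Real.Angle.coe_pi_add_coe_pi, add_zero]
  rfl

theorem coe_arg_edgeVec (hγ : IsStraightPath ε G γ) {j : ℕ} (hj : j + 1 < γ.length) :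
    (arg (edgeVec γ j) : Real.Angle) = arg (edgeVec γ 0) + turningSum γ j := by
  have hsum : ((turningSum γ j : ℝ) : Real.Angle) =
      ∑ i ∈ range j, ((arg (edgeVec γ (i + 1)) : Real.Angle) - arg (edgeVec γ i)) := by
    rw [turningSum, ← Real.Angle.coe_coeHom, map_sum]
    exact sum_congr rfl fun i hi => hγ.coe_pathAngle_sub_pi (by simp at hi; omega)
  rw [hsum, sum_range_sub (fun i => (arg (edgeVec γ i) : Real.Angle)), add_sub_cancel]

theorem exists_pi_le_turningSum_sub (hγ : IsStraightPath ε G γ) (hcl : IsClosedPath γ) :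
    ∃ a b, a ≤ γ.length - 2 ∧ b ≤ γ.length - 2 ∧ π ≤ turningSum γ a - turningSum γ b := by
  have hlen := hγ.1
  obtain ⟨a, ha, b, hb, h⟩ := exists_pi_le_sub_of_sum_eq_zero (s := range (γ.length - 1))
    (nonempty_range_iff.mpr (by omega))
    (fun j hj => hγ.edgeVec_ne_zero (by simp at hj; omega)) (arg (edgeVec γ 0))
    (fun j hj => hγ.coe_arg_edgeVec (by simp at hj; omega)) (sum_edgeVec_eq_zero hcl)
  simp only [mem_range] at ha hb
  exact ⟨a, b, by omega, by omega, h⟩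

theorem coe_turningSum_eq_closingAngle_sub_pi (hγ : IsStraightPath ε G γ)
    (hcl : IsClosedPath γ) :
    (turningSum γ (γ.length - 2) : Real.Angle) = (closingAngle γ - π : ℝ) := by
  have h3 := hγ.three_le_length hcl
  have hlast : γ.length - 2 + 1 = γ.length - 1 := by omega
  have hback : toComplex (nth γ (γ.length - 2) - nth γ 0) = -edgeVec γ (γ.length - 2) := by
    rw [edgeVec, hlast, ← hcl.nth_zero_eq, toComplex_sub, toComplex_sub, neg_sub]
  have hin : nth γ (γ.length - 2) - nth γ 0 ≠ 0 := by
    rw [hcl.nth_zero_eq, ← hlast]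
    exact sub_ne_zero.mpr (hγ.nth_ne_nth_succ (by omega))
  have hout : nth γ 1 - nth γ 0 ≠ 0 := sub_ne_zero.mpr (hγ.nth_ne_nth_succ (by omega)).symm
  rw [Real.Angle.coe_sub, closingAngle, coe_cwAngle hin hout, hback,
    arg_neg_coe_angle (hγ.edgeVec_ne_zero (by omega)), hγ.coe_arg_edgeVec (by omega)]
  change _ = _ + _ + _ - (arg (edgeVec γ 0) : Real.Angle) - _
  abel

theorem closingAngle_mem_goodAngles (hγ : IsStraightPath ε G γ) (hcl : IsClosedPath γ)
    {δ : ℝ} (hreg : EpsRegular δ G) : closingAngle γ ∈ goodAngles δ := by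
  have h3 := hγ.three_le_length hcl
  have hlast : γ.length - 2 + 1 = γ.length - 1 := by omega
  have hin : s(nth γ (γ.length - 2), nth γ 0) ∈ G.E := by
    rw [hcl.nth_zero_eq, ← hlast]
    exact hγ.mem_E (by omega)
  have hout : s(nth γ 1, nth γ 0) ∈ G.E := Sym2.eq_swap ▸ hγ.mem_E (i := 0) (by omega)
  have hne : nth γ (γ.length - 2) ≠ nth γ 1 := by
    intro h
    have := hγ.eq_of_edge_eq (i := γ.length - 2) (j := 0) (by omega) (by omega)
      (by rw [hlast, ← hcl.nth_zero_eq, h, Sym2.eq_swap])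
    omega
  exact hreg.2 _ _ _ hin hout hne

end IsStraightPath

theorem open_of_small_excess_general (ε : ℝ)
    (G : BondGraph) (hreg : EpsRegular ε G)
    (hex : ∀ γ : List Pt, IsStraightPath ε G γ → thetaEx γ < 3 * π / 2 - ε) :
    ∀ γ : List Pt, IsStraightPath ε G γ → ¬ IsClosedPath γ := by
  intro γ hγ hcl
  have hθ := abs_sub_pi_le_of_mem_goodAngles (hγ.closingAngle_mem_goodAngles hcl hreg)
  obtain ⟨a, b, ha, hb, hab⟩ := hγ.exists_pi_le_turningSum_sub hcl
  have hspread := two_mul_dist_le_sum_dist_add (turningSum γ) ha hb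
  have hend :=
    two_mul_dist_le_sum_dist_add (turningSum γ) (le_refl (γ.length - 2)) (Nat.zero_le _)
  rw [← thetaEx_eq_sum_dist] at hspread hend
  have hσ0 : turningSum γ 0 = 0 := sum_range_zero _
  simp only [Real.dist_eq, hσ0, sub_zero, zero_sub, abs_neg] at hspread hend
  have hgap := le_abs_self (turningSum γ a - turningSum γ b)
  have hsmall := hex γ hγ
  rcases Real.Angle.abs_le_or_le_abs_of_coe_eq
    (hγ.coe_turningSum_eq_closingAngle_sub_pi hcl) hθ with h | h <;> linarith

/-- **Lemma (small angle excess, (i)).** If every straight path has angle excess less than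
`3π/2 − ε`, then every straight path is open. -/
theorem open_of_small_excess (ε : ℝ) (hε0 : 0 < ε) (hε : ε < π / 6)
    (G : BondGraph) (hreg : EpsRegular ε G)
    (hex : ∀ γ : List Pt, IsStraightPath ε G γ → thetaEx γ < 3 * π / 2 - ε) :
    ∀ γ : List Pt, IsStraightPath ε G γ → ¬ IsClosedPath γ :=
  open_of_small_excess_general ε G hreg hex

end
end

section
/- Let ε ∈ (0, π/6), let r₀ ∈ (1, √2), and let v₂, v₃ be potentials satisfying assumptions (i₂)–(iii₂) and (i₃)–(iv₃). Then for every integer n ≥ 1 and every configuration C_n of n distinct points in ℝ² minimizing the energy F among all n-point configurations, one has F(C_n) ≤ −2n + ⌈2√n⌉. -/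
open scoped Real

noncomputable section

/-!
A minimizer has energy at most that of any competitor; take the first `n` points of the square
lattice filled row by row, `i ↦ (i mod m, ⌊i / m⌋)` with `m = ⌈√n⌉`. Distinct lattice points are
at distance `1` or at least `√2 > r₀`, so only unit bonds interact, each pair contributing `-1`,
and two bonds at a common site meet at angle `π/2`, `π` or `3π/2`, where `v₃` vanishes. The energy
is therefore minus the number of bonds, of which there are at least `n - 1 - ⌊(n - 1)/m⌋`
horizontal and `n - m` vertical ones; finally `⌊(n - 1)/m⌋ + m < 2√n` because `(m - √n)² < 1`.
-/

open Finset

namespace EReal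

lemma coe_finset_sum_s10 {α : Type*} (s : Finset α) (f : α → ℝ) :
    ((∑ a ∈ s, f a : ℝ) : EReal) = ∑ a ∈ s, (f a : EReal) :=
  map_sum (⟨⟨Real.toEReal, coe_zero⟩, coe_add⟩ : ℝ →+ EReal) f s

end EReal

def unitPairs {n : ℕ} (x : Fin n → Pt) : Finset (Fin n × Fin n) :=
  {p | dist (x p.1) (x p.2) = 1}

lemma energy_eq_neg_card_unitPairs {ε r0 : ℝ} {v2 : ℝ → EReal} {v3 : ℝ → ℝ} {n : ℕ}
    (hv2 : V2Hyp ε r0 v2) (x : Fin n → Pt)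
    (hsep : ∀ i j, i ≠ j → dist (x i) (x j) = 1 ∨ r0 ≤ dist (x i) (x j))
    (hv3x : ∀ i j k, i ≠ j → i ≠ k → j ≠ k → dist (x i) (x j) ≤ r0 → dist (x i) (x k) ≤ r0 →
      v3 (cwAngle (x j - x i) (x k - x i)) = 0) :
    energy r0 v2 v3 x = ((-(#(unitPairs x) : ℝ) / 2 : ℝ) : EReal) := by
  have hpair : ∀ i j, (if j ≠ i then v2 (dist (x i) (x j)) else 0)
      = ((-(if dist (x i) (x j) = 1 then 1 else 0 : ℝ) : ℝ) : EReal) := by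
    intro i j
    by_cases hji : j = i
    · simp [hji]
    by_cases h1 : dist (x i) (x j) = 1
    · simp [hji, h1, hv2.eq_neg_one]
    · have h := (hsep i j (Ne.symm hji)).resolve_left h1
      simp [hji, h1, hv2.eq_zero _ h]
  have hthree : ∀ i j k, (if i ≠ j ∧ i ≠ k ∧ j ≠ k ∧ dist (x i) (x j) ≤ r0 ∧ dist (x i) (x k) ≤ r0
      then v3 (cwAngle (x j - x i) (x k - x i)) else 0) = 0 := by
    intro i j k
    split_ifs with h
    exacts [hv3x i j k h.1 h.2.1 h.2.2.1 h.2.2.2.1 h.2.2.2.2, rfl]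
  have hcard : ∑ i, ∑ j, (-(if dist (x i) (x j) = 1 then 1 else 0 : ℝ)) = -#(unitPairs x) := by
    rw [← sum_product', sum_neg_distrib, sum_boole]
    rfl
  simp only [energy, hpair, hthree, ← EReal.coe_finset_sum_s10, hcard, sum_const_zero,
    mul_zero, ← EReal.coe_mul, ← EReal.coe_add]
  congr 1
  ring

def latticePt (a b : ℤ) : Pt := !₂[a, b]

@[simp] lemma latticePt_apply_zero (a b : ℤ) : latticePt a b 0 = a := rfl
@[simp] lemma latticePt_apply_one (a b : ℤ) : latticePt a b 1 = b := rfl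

lemma latticePt_sub (a b c d : ℤ) : latticePt a b - latticePt c d = latticePt (a - c) (b - d) := by
  ext i; fin_cases i <;> simp

lemma latticePt_inj {a b c d : ℤ} : latticePt a b = latticePt c d ↔ a = c ∧ b = d := by
  refine ⟨fun h => ⟨?_, ?_⟩, by rintro ⟨rfl, rfl⟩; rfl⟩
  · simpa using congrArg (· 0) h
  · simpa using congrArg (· 1) h

lemma dist_latticePt (a b c d : ℤ) :
    dist (latticePt a b) (latticePt c d) = √(((a - c) ^ 2 + (b - d) ^ 2 : ℤ) : ℝ) := by
  rw [EuclideanSpace.dist_eq, Fin.sum_univ_two]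
  simp [Real.dist_eq, sq_abs]

lemma Int.sq_add_sq_eq_one {a b : ℤ} (h : a ^ 2 + b ^ 2 = 1) :
    (a = 1 ∧ b = 0) ∨ (a = -1 ∧ b = 0) ∨ (a = 0 ∧ b = 1) ∨ (a = 0 ∧ b = -1) := by
  obtain ⟨ha₁, ha₂⟩ := abs_le.mp <| (sq_le_one_iff_abs_le_one a).mp (by nlinarith)
  obtain ⟨hb₁, hb₂⟩ := abs_le.mp <| (sq_le_one_iff_abs_le_one b).mp (by nlinarith)
  interval_cases a <;> interval_cases b <;> simp_all

lemma cwAngle_latticePt_mem {a b c d : ℤ} (hab : a ^ 2 + b ^ 2 = 1) (hcd : c ^ 2 + d ^ 2 = 1)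
    (hne : (a, b) ≠ (c, d)) :
    cwAngle (latticePt a b) (latticePt c d) ∈ ({π / 2, π, 3 * π / 2} : Set ℝ) := by
  have hz : (⟨a, b⟩ * (starRingEnd ℂ) ⟨c, d⟩ : ℂ) = -1 ∨
      (⟨a, b⟩ * (starRingEnd ℂ) ⟨c, d⟩ : ℂ) = Complex.I ∨
      (⟨a, b⟩ * (starRingEnd ℂ) ⟨c, d⟩ : ℂ) = -Complex.I := by
    rcases Int.sq_add_sq_eq_one hab with ⟨rfl, rfl⟩ | ⟨rfl, rfl⟩ | ⟨rfl, rfl⟩ | ⟨rfl, rfl⟩ <;>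
    rcases Int.sq_add_sq_eq_one hcd with ⟨rfl, rfl⟩ | ⟨rfl, rfl⟩ | ⟨rfl, rfl⟩ | ⟨rfl, rfl⟩ <;>
    simp_all [Complex.ext_iff]
  rcases hz with hz | hz | hz <;> simp only [cwAngle, latticePt_apply_zero, latticePt_apply_one, hz]
  · simp [Complex.arg_neg_one, Real.pi_pos.le]
  · simp [Complex.arg_I, Real.pi_div_two_pos.le]
  · simp only [Complex.arg_neg_I, if_pos (neg_lt_zero.mpr Real.pi_div_two_pos)]
    exact Or.inr (Or.inr (Set.mem_singleton_iff.mpr (by ring)))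

lemma dist_latticePt_eq_one_iff {a b c d : ℤ} :
    dist (latticePt a b) (latticePt c d) = 1 ↔ (a - c) ^ 2 + (b - d) ^ 2 = 1 := by
  rw [dist_latticePt, Real.sqrt_eq_one]
  exact_mod_cast Iff.rfl

lemma dist_latticePt_eq_one_or_sqrt_two_le {a b c d : ℤ} (hne : (a, b) ≠ (c, d)) :
    dist (latticePt a b) (latticePt c d) = 1 ∨ √2 ≤ dist (latticePt a b) (latticePt c d) := by
  have hne0 : (a - c) ^ 2 + (b - d) ^ 2 ≠ 0 := fun h => hne <| by
    rw [Prod.mk.injEq]; constructor <;> nlinarith [sq_nonneg (a - c), sq_nonneg (b - d)]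
  have hnonneg : 0 ≤ (a - c) ^ 2 + (b - d) ^ 2 := by positivity
  rcases eq_or_lt_of_le (show 1 ≤ (a - c) ^ 2 + (b - d) ^ 2 by omega) with h | h
  · exact Or.inl (dist_latticePt_eq_one_iff.mpr h.symm)
  · right
    rw [dist_latticePt]
    exact Real.sqrt_le_sqrt (by exact_mod_cast h)

def gridPt (m i : ℕ) : Pt := latticePt (i % m : ℕ) (i / m : ℕ)

lemma gridPt_injective (m : ℕ) : Function.Injective (gridPt m) := by
  intro i j h
  obtain ⟨hmod, hdiv⟩ := latticePt_inj.mp h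
  rw [← Nat.div_add_mod i m, ← Nat.div_add_mod j m, Nat.cast_inj.mp hmod, Nat.cast_inj.mp hdiv]

lemma dist_gridPt_add_one {m i : ℕ} (h : ¬ m ∣ i + 1) :
    dist (gridPt m i) (gridPt m (i + 1)) = 1 := by
  have hdiv := Nat.succ_div_of_not_dvd h
  have hmod : (i + 1) % m = i % m + 1 := by
    have h₁ := Nat.div_add_mod (i + 1) m
    have h₂ := Nat.div_add_mod i m
    rw [hdiv] at h₁
    omega
  rw [gridPt, gridPt, dist_latticePt_eq_one_iff, hdiv, hmod]
  push_cast
  ring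

lemma dist_gridPt_add_self {m : ℕ} (hm : 0 < m) (i : ℕ) :
    dist (gridPt m i) (gridPt m (i + m)) = 1 := by
  rw [gridPt, gridPt, dist_latticePt_eq_one_iff, Nat.add_mod_right, Nat.add_div_right _ hm]
  push_cast
  ring

lemma dist_gridPt_eq_one_or_sqrt_two_le {m i j : ℕ} (hij : i ≠ j) :
    dist (gridPt m i) (gridPt m j) = 1 ∨ √2 ≤ dist (gridPt m i) (gridPt m j) :=
  dist_latticePt_eq_one_or_sqrt_two_le fun h => hij <| gridPt_injective m <| by
    rw [gridPt, gridPt, (Prod.mk.inj h).1, (Prod.mk.inj h).2]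

lemma cwAngle_gridPt_sub_mem {m i j k : ℕ} (hj : dist (gridPt m i) (gridPt m j) = 1)
    (hk : dist (gridPt m i) (gridPt m k) = 1) (hjk : j ≠ k) :
    cwAngle (gridPt m j - gridPt m i) (gridPt m k - gridPt m i) ∈
      ({π / 2, π, 3 * π / 2} : Set ℝ) := by
  simp only [gridPt, latticePt_sub] at hj hk ⊢
  rw [dist_comm, dist_latticePt_eq_one_iff] at hj hk
  refine cwAngle_latticePt_mem hj hk fun h => hjk (gridPt_injective m ?_)
  obtain ⟨h₁, h₂⟩ := Prod.mk.inj h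
  rw [gridPt, gridPt, sub_left_inj.mp h₁, sub_left_inj.mp h₂]

def gridConfig (m n : ℕ) : Fin n → Pt := fun i => gridPt m i

lemma gridConfig_injective (m n : ℕ) : Function.Injective (gridConfig m n) :=
  fun _ _ h => Fin.ext (gridPt_injective m h)

lemma V3Hyp.eq_zero_of_mem {ε : ℝ} {v3 : ℝ → ℝ} (hv3 : V3Hyp ε v3) {θ : ℝ}
    (hθ : θ ∈ ({π / 2, π, 3 * π / 2} : Set ℝ)) : v3 θ = 0 := by
  rcases hθ with rfl | rfl | rfl
  exacts [hv3.zero_pi_half, hv3.zero_pi, hv3.zero_three_pi_half]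

lemma energy_gridConfig {ε r0 : ℝ} {v2 : ℝ → EReal} {v3 : ℝ → ℝ} (hv2 : V2Hyp ε r0 v2)
    (hv3 : V3Hyp ε v3) (hr0 : r0 < √2) (m n : ℕ) :
    energy r0 v2 v3 (gridConfig m n) =
      ((-(#(unitPairs (gridConfig m n)) : ℝ) / 2 : ℝ) : EReal) := by
  have hunit : ∀ i j : Fin n, i ≠ j → dist (gridConfig m n i) (gridConfig m n j) ≤ r0 →
      dist (gridConfig m n i) (gridConfig m n j) = 1 := fun i j hij hd =>
    (dist_gridPt_eq_one_or_sqrt_two_le (Fin.val_ne_of_ne hij)).resolve_right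
      fun h => (h.trans hd).not_gt hr0
  refine energy_eq_neg_card_unitPairs hv2 _ (fun i j hij => ?_) fun i j k hij hik hjk hj hk => ?_
  · exact (dist_gridPt_eq_one_or_sqrt_two_le (Fin.val_ne_of_ne hij)).imp_right hr0.le.trans
  · exact hv3.eq_zero_of_mem <|
      cwAngle_gridPt_sub_mem (hunit i j hij hj) (hunit i k hik hk) (Fin.val_ne_of_ne hjk)

lemma card_le_card_unitPairs_gridConfig {m n : ℕ} {Q : Finset (ℕ × ℕ)}
    (hQ : ∀ q ∈ Q, q.1 < n ∧ q.2 < n ∧ dist (gridPt m q.1) (gridPt m q.2) = 1) :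
    #Q ≤ #(unitPairs (gridConfig m n)) := by
  refine card_le_card_of_surjOn (fun p : Fin n × Fin n => ((p.1 : ℕ), (p.2 : ℕ))) fun q hq => ?_
  obtain ⟨h₁, h₂, hd⟩ := hQ q hq
  exact ⟨(⟨q.1, h₁⟩, ⟨q.2, h₂⟩), mem_filter.mpr ⟨mem_univ _, hd⟩, rfl⟩

lemma Finset.card_union_image_swap {α : Type*} [LinearOrder α] {A : Finset (α × α)}
    (hA : ∀ p ∈ A, p.1 < p.2) : #(A ∪ A.image Prod.swap) = 2 * #A := by
  rw [card_union_of_disjoint, card_image_of_injective _ Prod.swap_injective, two_mul]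
  rw [disjoint_left]
  rintro p hp hp'
  obtain ⟨q, hq, rfl⟩ := mem_image.mp hp'
  exact lt_asymm (hA q hq) (hA _ hp)

lemma card_unitPairs_gridConfig_ge {m : ℕ} (hm : 0 < m) (n : ℕ) :
    2 * (n - 1 - (n - 1) / m + (n - m)) ≤ #(unitPairs (gridConfig m n)) := by
  have hH : #((range (n - 1)).filter fun i => ¬ m ∣ i + 1) = n - 1 - (n - 1) / m := by
    rw [filter_not, card_sdiff_of_subset (filter_subset _ _), Nat.card_multiples, card_range]
  set H := (range (n - 1)).filter fun i => ¬ m ∣ i + 1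
  set A := H.image (fun i => (i, i + 1)) ∪ (range (n - m)).image fun i => (i, i + m)
  have hA : #A = #H + (n - m) := by
    rw [card_union_of_disjoint, card_image_of_injective _ fun _ _ h => (Prod.mk.inj h).1,
      card_image_of_injective _ fun _ _ h => (Prod.mk.inj h).1, card_range]
    rw [disjoint_left]
    intro _ hp hp'
    obtain ⟨i, hi, rfl⟩ := mem_image.mp hp
    obtain ⟨j, -, hj⟩ := mem_image.mp hp'
    obtain ⟨rfl, hm1⟩ := Prod.mk.inj hj
    obtain rfl : m = 1 := by omega
    exact (mem_filter.mp hi).2 (one_dvd _)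
  have hbond : ∀ p ∈ A, p.1 < p.2 ∧ p.2 < n ∧ dist (gridPt m p.1) (gridPt m p.2) = 1 := by
    intro p hp
    rcases mem_union.mp hp with hp | hp
    · obtain ⟨i, hi, rfl⟩ := mem_image.mp hp
      obtain ⟨hi, hdvd⟩ := mem_filter.mp hi
      exact ⟨i.lt_add_one, by rw [mem_range] at hi; omega, dist_gridPt_add_one hdvd⟩
    · obtain ⟨i, hi, rfl⟩ := mem_image.mp hp
      exact ⟨by omega, by rw [mem_range] at hi; omega, dist_gridPt_add_self hm i⟩
  calc 2 * (n - 1 - (n - 1) / m + (n - m)) = #(A ∪ A.image Prod.swap) := by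
        rw [card_union_image_swap fun p hp => (hbond p hp).1, hA, hH]
    _ ≤ #(unitPairs (gridConfig m n)) := card_le_card_unitPairs_gridConfig fun q hq => by
        rcases mem_union.mp hq with hq | hq
        · obtain ⟨h₁, h₂, hd⟩ := hbond q hq
          exact ⟨h₁.trans h₂, h₂, hd⟩
        · obtain ⟨p, hp, rfl⟩ := mem_image.mp hq
          obtain ⟨h₁, h₂, hd⟩ := hbond p hp
          exact ⟨h₂, h₁.trans h₂, by rw [Prod.fst_swap, Prod.snd_swap, dist_comm, hd]⟩

lemma div_ceil_sqrt_add_ceil_sqrt_add_one_le {n : ℕ} (hn : 1 ≤ n) :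
    (((n - 1) / ⌈√(n : ℝ)⌉₊ + ⌈√(n : ℝ)⌉₊ + 1 : ℕ) : ℤ) ≤ ⌈2 * √(n : ℝ)⌉ := by
  set s := √(n : ℝ)
  set m := ⌈s⌉₊
  have hs : s ^ 2 = n := Real.sq_sqrt n.cast_nonneg
  have hsm : s ≤ m := Nat.le_ceil s
  have hms : (m : ℝ) < s + 1 := Nat.ceil_lt_add_one (Real.sqrt_nonneg _)
  have hm : (0 : ℝ) < m :=
    Nat.cast_pos.mpr (Nat.ceil_pos.mpr (Real.sqrt_pos.mpr (by exact_mod_cast hn)))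
  have hq : (((n - 1) / m : ℕ) : ℝ) * m ≤ n - 1 := by
    rw [← Nat.cast_pred hn]
    exact_mod_cast Nat.div_mul_le_self (n - 1) m
  -- `((n - 1) / m + m) m ≤ n - 1 + m² < 2 s m` because `(m - s)² < 1`
  have hlt : (((n - 1) / m : ℕ) + m : ℝ) < 2 * s :=
    lt_of_mul_lt_mul_right (by nlinarith) hm.le
  rw [Int.le_ceil_iff]
  simpa only [Int.cast_sub, Nat.cast_add, Nat.cast_one, Int.cast_add, Int.cast_one,
    Int.cast_natCast, add_sub_cancel_right] using hlt

lemma card_unitPairs_gridConfig_ceil_sqrt_ge {n : ℕ} (hn : 1 ≤ n) :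
    4 * (n : ℝ) - 2 * ⌈2 * √(n : ℝ)⌉ ≤ #(unitPairs (gridConfig ⌈√(n : ℝ)⌉₊ n)) := by
  set m := ⌈√(n : ℝ)⌉₊
  have hm : 0 < m := Nat.ceil_pos.mpr (Real.sqrt_pos.mpr (by exact_mod_cast hn))
  have hmn : m ≤ n := Nat.ceil_le.mpr (Real.sqrt_le_self_iff.mpr (Or.inr (by exact_mod_cast hn)))
  have hpairs : 4 * n ≤ #(unitPairs (gridConfig m n)) + 2 * ((n - 1) / m + m + 1) := by
    have := card_unitPairs_gridConfig_ge hm n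
    have := Nat.div_le_self (n - 1) m
    omega
  have hceil := (Int.cast_le (R := ℝ)).mpr (div_ceil_sqrt_add_ceil_sqrt_add_one_le hn)
  rw [Int.cast_natCast] at hceil
  have hpairs' : (4 * n : ℝ) ≤ #(unitPairs (gridConfig m n)) + 2 * ((n - 1) / m + m + 1 : ℕ) :=
    by exact_mod_cast hpairs
  linarith

theorem minimizer_upper_bound_general (ε : ℝ) (r0 : ℝ) (hr0' : r0 < Real.sqrt 2)
    (v2 : ℝ → EReal) (v3 : ℝ → ℝ) (hv2 : V2Hyp ε r0 v2) (hv3 : V3Hyp ε v3)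
    (n : ℕ) (hn : 1 ≤ n) (x : Fin n → Pt) (hx : IsMinimizer r0 v2 v3 x) :
    energy r0 v2 v3 x ≤ ((-2 * (n : ℝ) + (⌈2 * Real.sqrt n⌉ : ℤ) : ℝ) : EReal) := by
  set m := ⌈√(n : ℝ)⌉₊
  calc energy r0 v2 v3 x ≤ energy r0 v2 v3 (gridConfig m n) := hx.2 _ (gridConfig_injective m n)
    _ = ((-(#(unitPairs (gridConfig m n)) : ℝ) / 2 : ℝ) : EReal) :=
      energy_gridConfig hv2 hv3 hr0' m n
    _ ≤ _ := EReal.coe_le_coe_iff.mpr (by linarith [card_unitPairs_gridConfig_ceil_sqrt_ge hn])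

/-- **Upper bound for minimizers.** Every `n`-point ground state has energy at most
`−2n + ⌈2√n⌉`. -/
theorem minimizer_upper_bound (ε : ℝ) (hε0 : 0 < ε) (hε : ε < π / 6)
    (r0 : ℝ) (hr0 : 1 < r0) (hr0' : r0 < Real.sqrt 2)
    (v2 : ℝ → EReal) (v3 : ℝ → ℝ) (hv2 : V2Hyp ε r0 v2) (hv3 : V3Hyp ε v3)
    (n : ℕ) (hn : 1 ≤ n) (x : Fin n → Pt) (hx : IsMinimizer r0 v2 v3 x) :
    energy r0 v2 v3 x ≤ ((-2 * (n : ℝ) + (⌈2 * Real.sqrt n⌉ : ℤ) : ℝ) : EReal) :=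
  minimizer_upper_bound_general ε r0 hr0' v2 v3 hv2 hv3 n hn x hx
end
end

section
/- For every integer n ≥ 1 there exists a finite set V ⊆ ℤ² with #V = n such that the number of nearest-neighbor pairs of V equals exactly 2n − ⌈2√n⌉, i.e. #{{x,y} ⊆ V : |x−y| = 1} = 2n − ⌈2√n⌉. -/
/-!
Take an `a × b` rectangle with a partial row of `1 ≤ c ≤ a` cells on top, so `n = ab + c`.
It has `(a - 1)b + (c - 1)` horizontal and `a(b - 1) + c` vertical bonds, i.e. `2n - (a + b + 1)`.
With `b = ⌊√(n - 1)⌋` and `a ∈ {b, b + 1}` one gets `(a + b)² < 4n ≤ (a + b + 1)²`,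
which says exactly that `a + b + 1 = ⌈2√n⌉`.
-/

/-- The set of nearest-neighbor pairs of `V ⊆ ℤ²`: unordered pairs of distinct points of `V`
at Euclidean distance `1`. -/
def nnPairs (V : Finset (ℤ × ℤ)) : Set (Sym2 (ℤ × ℤ)) :=
  {e | ∃ x ∈ V, ∃ y ∈ V, x ≠ y ∧
    Real.sqrt (((x.1 : ℝ) - (y.1 : ℝ)) ^ 2 + ((x.2 : ℝ) - (y.2 : ℝ)) ^ 2) = 1 ∧
    e = s(x, y)}

open Finset

theorem Sym2.mk_add_eq_mk_add_iff {G : Type*} [AddCommGroup G] {x y u v : G} :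
    s(x, x + u) = s(y, y + v) ↔ x = y ∧ u = v ∨ x = y + v ∧ u = -v := by
  rw [Sym2.eq_iff]
  constructor
  · rintro (⟨rfl, h⟩ | ⟨rfl, h⟩)
    · exact .inl ⟨rfl, add_left_cancel h⟩
    · rw [add_assoc, add_eq_left] at h
      exact .inr ⟨rfl, eq_neg_of_add_eq_zero_right h⟩
  · rintro (⟨rfl, rfl⟩ | ⟨rfl, rfl⟩)
    · exact .inl ⟨rfl, rfl⟩
    · exact .inr ⟨rfl, by abel⟩

theorem Int.sq_add_sq_eq_one_iff {u v : ℤ} :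
    u ^ 2 + v ^ 2 = 1 ↔ (u = 1 ∨ u = -1) ∧ v = 0 ∨ u = 0 ∧ (v = 1 ∨ v = -1) := by
  constructor
  · intro h
    have hu : |u| ≤ 1 := (sq_le_one_iff_abs_le_one u).mp (by nlinarith [sq_nonneg v])
    have hv : |v| ≤ 1 := (sq_le_one_iff_abs_le_one v).mp (by nlinarith [sq_nonneg u])
    rcases Int.abs_le_one_iff.mp hu with rfl | rfl | rfl <;>
      rcases Int.abs_le_one_iff.mp hv with rfl | rfl | rfl <;> simp_all
  · rintro (⟨rfl | rfl, rfl⟩ | ⟨rfl, rfl | rfl⟩) <;> norm_num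

theorem sqrt_dist_eq_one_iff (x y : ℤ × ℤ) :
    √(((x.1 : ℝ) - y.1) ^ 2 + ((x.2 : ℝ) - y.2) ^ 2) = 1 ↔
      y = x + (1, 0) ∨ x = y + (1, 0) ∨ y = x + (0, 1) ∨ x = y + (0, 1) := by
  obtain ⟨x1, x2⟩ := x
  obtain ⟨y1, y2⟩ := y
  rw [Real.sqrt_eq_one]
  norm_cast
  rw [Int.sq_add_sq_eq_one_iff]
  simp only [Prod.mk_add_mk, Prod.mk.injEq]
  omega

section Bonds

variable {G : Type*} [AddCommGroup G] [DecidableEq G]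

def bondsAlong (V : Finset G) (u : G) : Finset (Sym2 G) :=
  {x ∈ V | x + u ∈ V}.image fun x => s(x, x + u)

theorem card_bondsAlong (V : Finset G) {u : G} (hu : u ≠ -u) :
    #(bondsAlong V u) = #{x ∈ V | x + u ∈ V} := by
  refine card_image_of_injective _ fun x y h => ?_
  rcases Sym2.mk_add_eq_mk_add_iff.mp h with ⟨hxy, -⟩ | ⟨-, h⟩
  exacts [hxy, absurd h hu]

theorem disjoint_bondsAlong (V : Finset G) {u v : G} (huv : u ≠ v) (huv' : u ≠ -v) :
    Disjoint (bondsAlong V u) (bondsAlong V v) := by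
  simp only [bondsAlong, disjoint_left, mem_image, not_exists, not_and]
  rintro _ ⟨x, -, rfl⟩ y - h
  rcases Sym2.mk_add_eq_mk_add_iff.mp h.symm with ⟨-, h⟩ | ⟨-, h⟩
  exacts [huv h, huv' h]

end Bonds

theorem nnPairs_eq_bondsAlong (V : Finset (ℤ × ℤ)) :
    nnPairs V = ↑(bondsAlong V (1, 0) ∪ bondsAlong V (0, 1)) := by
  ext e
  simp only [nnPairs, sqrt_dist_eq_one_iff, bondsAlong, Set.mem_ofPred_eq, coe_union, coe_image,
    coe_filter, Set.mem_union, Set.mem_image]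
  constructor
  · rintro ⟨x, hx, y, hy, -, rfl | rfl | rfl | rfl, rfl⟩
    exacts [.inl ⟨x, ⟨hx, hy⟩, rfl⟩, .inl ⟨y, ⟨hy, hx⟩, Sym2.eq_swap⟩,
      .inr ⟨x, ⟨hx, hy⟩, rfl⟩, .inr ⟨y, ⟨hy, hx⟩, Sym2.eq_swap⟩]
  · rintro (⟨x, ⟨hx, hx'⟩, rfl⟩ | ⟨x, ⟨hx, hx'⟩, rfl⟩)
    exacts [⟨x, hx, _, hx', by simp, .inl rfl, rfl⟩,
      ⟨x, hx, _, hx', by simp, .inr (.inr (.inl rfl)), rfl⟩]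

theorem ncard_nnPairs (V : Finset (ℤ × ℤ)) :
    (nnPairs V).ncard = #{x ∈ V | x + (1, 0) ∈ V} + #{x ∈ V | x + (0, 1) ∈ V} := by
  rw [nnPairs_eq_bondsAlong, Set.ncard_coe_finset,
    card_union_of_disjoint (disjoint_bondsAlong V (by decide) (by decide)),
    card_bondsAlong V (by decide), card_bondsAlong V (by decide)]

noncomputable def rectWithRow (a b c : ℕ) : Finset (ℤ × ℤ) :=
  Ico 0 (a : ℤ) ×ˢ Ico 0 (b : ℤ) ∪ Ico 0 (c : ℤ) ×ˢ {(b : ℤ)}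

theorem mem_rectWithRow {a b c : ℕ} {x : ℤ × ℤ} :
    x ∈ rectWithRow a b c ↔
      0 ≤ x.1 ∧ (x.1 < a ∧ 0 ≤ x.2 ∧ x.2 < b ∨ x.1 < c ∧ x.2 = b) := by
  simp only [rectWithRow, mem_union, mem_product, mem_Ico, mem_singleton]
  tauto

theorem card_rectWithRow (a b c : ℕ) : #(rectWithRow a b c) = a * b + c := by
  rw [rectWithRow, card_union_of_disjoint]
  · simp
  · simp only [disjoint_left, mem_product, mem_Ico, mem_singleton]
    omega

theorem filter_add_right_mem_rectWithRow {a b c : ℕ} (hc : 1 ≤ c) (hca : c ≤ a) :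
    {x ∈ rectWithRow a b c | x + (1, 0) ∈ rectWithRow a b c} =
      rectWithRow (a - 1) b (c - 1) := by
  ext ⟨x1, x2⟩
  simp only [mem_filter, mem_rectWithRow, Prod.mk_add_mk]
  omega

theorem filter_add_up_mem_rectWithRow {a b c : ℕ} (hb : 1 ≤ b) (hca : c ≤ a) :
    {x ∈ rectWithRow a b c | x + (0, 1) ∈ rectWithRow a b c} = rectWithRow a (b - 1) c := by
  ext ⟨x1, x2⟩
  simp only [mem_filter, mem_rectWithRow, Prod.mk_add_mk]
  omega

theorem ncard_nnPairs_rectWithRow {a b c : ℕ} (hb : 1 ≤ b) (hc : 1 ≤ c) (hca : c ≤ a) :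
    ((nnPairs (rectWithRow a b c)).ncard : ℤ) = 2 * (a * b + c) - (a + b + 1) := by
  rw [ncard_nnPairs, filter_add_right_mem_rectWithRow hc hca, filter_add_up_mem_rectWithRow hb hca,
    card_rectWithRow, card_rectWithRow]
  push_cast [Nat.cast_sub hb, Nat.cast_sub hc, Nat.cast_sub (hc.trans hca)]
  ring

theorem ceil_two_mul_sqrt_eq {n m : ℕ} (hlo : m ^ 2 < 4 * n) (hhi : 4 * n ≤ (m + 1) ^ 2) :
    ⌈2 * √(n : ℝ)⌉ = m + 1 := by
  have h2 : 2 * √(n : ℝ) = √(4 * n) := by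
    rw [Real.sqrt_mul zero_le_four, show (4 : ℝ) = 2 ^ 2 by norm_num, Real.sqrt_sq zero_le_two]
  rw [Int.ceil_eq_iff, h2]
  push_cast
  constructor
  · rw [add_sub_cancel_right, Real.lt_sqrt (Nat.cast_nonneg m)]
    exact_mod_cast hlo
  · rw [Real.sqrt_le_left (by positivity)]
    exact_mod_cast hhi

theorem exists_rectWithRow_dims {n : ℕ} (hn : 2 ≤ n) :
    ∃ a b c : ℕ, 1 ≤ b ∧ 1 ≤ c ∧ c ≤ a ∧ n = a * b + c ∧
      (a + b) ^ 2 < 4 * n ∧ 4 * n ≤ (a + b + 1) ^ 2 := by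
  obtain ⟨b, hb, hlo, hhi⟩ : ∃ b, 1 ≤ b ∧ b * b < n ∧ n ≤ b * b + 2 * b + 1 :=
    ⟨Nat.sqrt (n - 1), Nat.le_sqrt.mpr (by omega), by have := Nat.sqrt_le (n - 1); omega,
      by have := Nat.lt_succ_sqrt (n - 1); rw [Nat.succ_mul, Nat.mul_succ] at this; omega⟩
  by_cases hsq : n ≤ b * b + b
  · exact ⟨b, b, n - b * b, hb, by omega, by omega, by omega, by nlinarith, by nlinarith⟩
  · have hmul : (b + 1) * b = b * b + b := add_one_mul b b
    exact ⟨b + 1, b, n - (b + 1) * b, hb, by omega, by omega, by omega,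
      by nlinarith, by nlinarith⟩

/-- For every `n ≥ 1` there is an `n`-point subset of `ℤ²` with exactly `2n − ⌈2√n⌉`
nearest-neighbor pairs. -/
theorem exists_config_with_max_bonds (n : ℕ) (hn : 1 ≤ n) :
    ∃ V : Finset (ℤ × ℤ), V.card = n ∧
      ((nnPairs V).ncard : ℤ) = 2 * (n : ℤ) - ⌈2 * Real.sqrt n⌉ := by
  obtain rfl | hn := hn.eq_or_lt
  · refine ⟨{0}, rfl, ?_⟩
    rw [ncard_nnPairs, ceil_two_mul_sqrt_eq (m := 1) (by norm_num) (by norm_num)]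
    simp [filter_singleton, Prod.ext_iff]
  · obtain ⟨a, b, c, hb, hc, hca, rfl, hlo, hhi⟩ := exists_rectWithRow_dims hn
    refine ⟨rectWithRow a b c, card_rectWithRow a b c, ?_⟩
    rw [ncard_nnPairs_rectWithRow hb hc hca, ceil_two_mul_sqrt_eq hlo hhi]
    push_cast
    ring
end

section
/- For every finite set V ⊆ ℤ² with #V = n ≥ 1, the number of nearest-neighbor pairs of V is at most 2n − ⌈2√n⌉, i.e. #{{x,y} ⊆ V : |x−y| = 1} ≤ 2n − ⌈2√n⌉. -/
/-- **Edge isoperimetric inequality on `ℤ²`.** Every `n`-point subset of `ℤ²` has at most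
`2n − ⌈2√n⌉` nearest-neighbor pairs. -/
theorem card_bonds_le (V : Finset (ℤ × ℤ)) (n : ℕ) (hn : 1 ≤ n) (hV : V.card = n) :
    ((nnPairs V).ncard : ℤ) ≤ 2 * (n : ℤ) - ⌈2 * Real.sqrt n⌉ := by
  classical
  set HF := V.filter (fun p => (p.1 + 1, p.2) ∈ V) with hHFdef
  set VF := V.filter (fun p => (p.1, p.2 + 1) ∈ V) with hVFdef
  set F := HF.image (fun p => s(p, (p.1 + 1, p.2))) ∪
      VF.image (fun p => s(p, (p.1, p.2 + 1))) with hFdef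
  have hsub : nnPairs V ⊆ ↑F := by
    rintro e ⟨x, hx, y, hy, hxy, hdist, rfl⟩
    have h0 : (0:ℝ) ≤ ((x.1 : ℝ) - (y.1 : ℝ)) ^ 2 + ((x.2 : ℝ) - (y.2 : ℝ)) ^ 2 := by positivity
    have h1 : ((x.1 : ℝ) - (y.1 : ℝ)) ^ 2 + ((x.2 : ℝ) - (y.2 : ℝ)) ^ 2 = 1 := by
      have := Real.sqrt_eq_one.mp hdist
      exact this
    have hint : (x.1 - y.1) ^ 2 + (x.2 - y.2) ^ 2 = 1 := by exact_mod_cast h1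
    set d1 := x.1 - y.1 with hd1
    set d2 := x.2 - y.2 with hd2
    have hb1 : -1 ≤ d1 ∧ d1 ≤ 1 := by constructor <;> nlinarith [sq_nonneg d2, sq_nonneg (d1 - 1), sq_nonneg (d1 + 1)]
    have hcases : d1 = -1 ∨ d1 = 0 ∨ d1 = 1 := by omega
    rw [Finset.mem_coe, hFdef, Finset.mem_union]
    rcases hcases with h | h | h
    · -- d1 = -1, so d2 = 0, y = (x.1 + 1, x.2)
      have hd2' : d2 = 0 := by nlinarith
      have hy' : y = (x.1 + 1, x.2) :=
        Prod.ext (show y.1 = x.1 + 1 by omega) (show y.2 = x.2 by omega)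
      left
      exact Finset.mem_image.mpr ⟨x, Finset.mem_filter.mpr ⟨hx, hy' ▸ hy⟩, by rw [hy']⟩
    · -- d1 = 0
      have hd2' : d2 = -1 ∨ d2 = 1 := by
        have : d2 ^ 2 = 1 := by nlinarith
        have hb2 : -1 ≤ d2 ∧ d2 ≤ 1 := by constructor <;> nlinarith [sq_nonneg (d2 - 1), sq_nonneg (d2 + 1)]
        have : d2 ≠ 0 := by intro h0'; rw [h0'] at this; norm_num at this
        omega
      rcases hd2' with h2 | h2
      · -- y = (x.1, x.2 + 1)
        have hy' : y = (x.1, x.2 + 1) :=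
          Prod.ext (show y.1 = x.1 by omega) (show y.2 = x.2 + 1 by omega)
        right
        exact Finset.mem_image.mpr ⟨x, Finset.mem_filter.mpr ⟨hx, hy' ▸ hy⟩, by rw [hy']⟩
      · -- x = (y.1, y.2 + 1)
        have hx' : x = (y.1, y.2 + 1) :=
          Prod.ext (show x.1 = y.1 by omega) (show x.2 = y.2 + 1 by omega)
        right
        refine Finset.mem_image.mpr ⟨y, Finset.mem_filter.mpr ⟨hy, hx' ▸ hx⟩, ?_⟩
        rw [← hx', Sym2.eq_swap]
    · -- d1 = 1, x = (y.1 + 1, y.2)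
      have hd2' : d2 = 0 := by nlinarith
      have hx' : x = (y.1 + 1, y.2) :=
        Prod.ext (show x.1 = y.1 + 1 by omega) (show x.2 = y.2 by omega)
      left
      refine Finset.mem_image.mpr ⟨y, Finset.mem_filter.mpr ⟨hy, hx' ▸ hx⟩, ?_⟩
      rw [← hx', Sym2.eq_swap]
  have hncard : (nnPairs V).ncard ≤ HF.card + VF.card := by
    calc (nnPairs V).ncard ≤ F.card := by
          rw [← Set.ncard_coe_finset F]
          exact Set.ncard_le_ncard hsub (Finset.finite_toSet F)
      _ ≤ _ := le_trans (Finset.card_union_le _ _)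
          (add_le_add (Finset.card_image_le) (Finset.card_image_le))
  set R := V.image Prod.snd with hRdef
  set C := V.image Prod.fst with hCdef
  -- rows bound
  have hrow : HF.card + R.card ≤ n := by
    have hRsub : R ⊆ (V \ HF).image Prod.snd := by
      intro r hr
      obtain ⟨p, hp, rfl⟩ := Finset.mem_image.mp hr
      set S := (V.filter (fun q => q.2 = p.2)).image Prod.fst with hSdef
      have hSne : S.Nonempty := ⟨p.1, Finset.mem_image.mpr ⟨p, Finset.mem_filter.mpr ⟨hp, rfl⟩, rfl⟩⟩
      set m := S.max' hSne with hm
      obtain ⟨q, hq, hq1⟩ := Finset.mem_image.mp (S.max'_mem hSne)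
      have hqV := (Finset.mem_filter.mp hq).1
      have hq2 : q.2 = p.2 := (Finset.mem_filter.mp hq).2
      have hqeq : q = (m, p.2) := Prod.ext hq1 hq2
      have hnot : (m + 1, p.2) ∉ V := by
        intro hmem
        have : m + 1 ∈ S := Finset.mem_image.mpr ⟨(m + 1, p.2), Finset.mem_filter.mpr ⟨hmem, rfl⟩, rfl⟩
        have := S.le_max' (m + 1) this
        omega
      refine Finset.mem_image.mpr ⟨(m, p.2), Finset.mem_sdiff.mpr ⟨hqeq ▸ hqV, ?_⟩, rfl⟩
      rw [hHFdef]
      simp only [Finset.mem_filter, not_and]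
      intro _
      exact hnot
    have h1 : R.card ≤ (V \ HF).card := le_trans (Finset.card_le_card hRsub) Finset.card_image_le
    have h2 : (V \ HF).card = V.card - HF.card := Finset.card_sdiff_of_subset (Finset.filter_subset _ _)
    have h3 : HF.card ≤ V.card := Finset.card_le_card (Finset.filter_subset _ _)
    omega
  have hcol : VF.card + C.card ≤ n := by
    have hCsub : C ⊆ (V \ VF).image Prod.fst := by
      intro c hc
      obtain ⟨p, hp, rfl⟩ := Finset.mem_image.mp hc
      set S := (V.filter (fun q => q.1 = p.1)).image Prod.snd with hSdef
      have hSne : S.Nonempty := ⟨p.2, Finset.mem_image.mpr ⟨p, Finset.mem_filter.mpr ⟨hp, rfl⟩, rfl⟩⟩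
      set m := S.max' hSne with hm
      obtain ⟨q, hq, hq2⟩ := Finset.mem_image.mp (S.max'_mem hSne)
      have hqV := (Finset.mem_filter.mp hq).1
      have hq1 : q.1 = p.1 := (Finset.mem_filter.mp hq).2
      have hqeq : q = (p.1, m) := Prod.ext hq1 hq2
      have hnot : (p.1, m + 1) ∉ V := by
        intro hmem
        have : m + 1 ∈ S := Finset.mem_image.mpr ⟨(p.1, m + 1), Finset.mem_filter.mpr ⟨hmem, rfl⟩, rfl⟩
        have := S.le_max' (m + 1) this
        omega
      refine Finset.mem_image.mpr ⟨(p.1, m), Finset.mem_sdiff.mpr ⟨hqeq ▸ hqV, ?_⟩, rfl⟩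
      rw [hVFdef]
      simp only [Finset.mem_filter, not_and]
      intro _
      exact hnot
    have h1 : C.card ≤ (V \ VF).card := le_trans (Finset.card_le_card hCsub) Finset.card_image_le
    have h2 : (V \ VF).card = V.card - VF.card := Finset.card_sdiff_of_subset (Finset.filter_subset _ _)
    have h3 : VF.card ≤ V.card := Finset.card_le_card (Finset.filter_subset _ _)
    omega
  -- n ≤ #C * #R
  have hprod : n ≤ C.card * R.card := by
    have hsub' : V ⊆ C ×ˢ R := by
      intro p hp
      exact Finset.mem_product.mpr ⟨Finset.mem_image_of_mem _ hp, Finset.mem_image_of_mem _ hp⟩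
    calc n = V.card := hV.symm
      _ ≤ (C ×ˢ R).card := Finset.card_le_card hsub'
      _ = C.card * R.card := Finset.card_product _ _
  -- 2√n ≤ #C + #R
  have hsqrt : 2 * Real.sqrt n ≤ (C.card : ℝ) + R.card := by
    have h1 : Real.sqrt n ≤ Real.sqrt ((C.card : ℝ) * R.card) := by
      apply Real.sqrt_le_sqrt
      exact_mod_cast hprod
    have h2 : Real.sqrt ((C.card : ℝ) * R.card) = Real.sqrt C.card * Real.sqrt R.card :=
      Real.sqrt_mul (by positivity) _
    have hc : Real.sqrt C.card ^ 2 = (C.card : ℝ) := Real.sq_sqrt (by positivity)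
    have hr : Real.sqrt R.card ^ 2 = (R.card : ℝ) := Real.sq_sqrt (by positivity)
    nlinarith [sq_nonneg (Real.sqrt C.card - Real.sqrt R.card)]
  have hceil : (⌈2 * Real.sqrt n⌉ : ℤ) ≤ (C.card : ℤ) + R.card := by
    apply Int.ceil_le.mpr
    push_cast
    exact hsqrt
  have h1 : (HF.card : ℤ) + R.card ≤ (n : ℤ) := by exact_mod_cast hrow
  have h2 : (VF.card : ℤ) + C.card ≤ (n : ℤ) := by exact_mod_cast hcol
  have h3 : ((nnPairs V).ncard : ℤ) ≤ (HF.card : ℤ) + VF.card := by exact_mod_cast hncard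
  linarith
end
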